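/- arXiv:2010.00102 — 6 statements merged into one kernel-verified Lean document; each statement's English description precedes it below -/
import Mathlib

section
/- Let K be a field of characteristic zero with GL₂(ℚ) acting on K by fractional linear transformations, and let D ⊆ K be closed under this action with D ∩ ℚ = ∅. If there exists a non-scalar matrix g ∈ GL₂(ℚ) fixing z ∈ D (i.e., g·z = z), then there exists h ∈ GL₂(ℚ) with h·z = z such that det(red(h)) > 1, where red(h) is the unique positive rational multiple of h with coprime integer entries. -/
noncomputable section

open scoped Classical

/-- The group `GL₂(ℚ)`. -/
abbrev GL2Q := Matrix.GeneralLinearGroup (Fin 2) ℚ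

variable {K : Type*} [Field K] [CharZero K]

/-- Entry of a matrix in `GL₂(ℚ)`. -/
def mEntry (g : GL2Q) (i k : Fin 2) : ℚ := (g : Matrix (Fin 2) (Fin 2) ℚ) i k

/-- Numerator of the fractional linear action. -/
def moebNum (g : GL2Q) (x : K) : K := (mEntry g 0 0 : K) * x + (mEntry g 0 1 : K)

/-- Denominator of the fractional linear action. -/
def moebDen (g : GL2Q) (x : K) : K := (mEntry g 1 0 : K) * x + (mEntry g 1 1 : K)

/-- The fractional linear (Möbius) action `g·x = (ax+b)/(cx+d)`. -/
def moeb (g : GL2Q) (x : K) : K := moebNum g x / moebDen g x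

/-- `MoebRel g x y` holds if the action of `g` at `x` is defined (denominator nonzero)
and `g·x = y`. -/
def MoebRel (g : GL2Q) (x y : K) : Prop := moebDen g x ≠ 0 ∧ moeb g x = y

/-- The `G`-closure of a set `A ⊆ K`: all elements of the form `g·a`, `a ∈ A`, `g ∈ GL₂(ℚ)`. -/
def Gcl (A : Set K) : Set K := {x | ∃ a ∈ A, ∃ g : GL2Q, MoebRel g a x}

/-- A matrix is scalar if it is a rational multiple of the identity. -/
def IsScalarMat (g : GL2Q) : Prop :=
  ∃ r : ℚ, (g : Matrix (Fin 2) (Fin 2) ℚ) = r • (1 : Matrix (Fin 2) (Fin 2) ℚ)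

/-- `IsRed g m`: `m` is the reduced integral form of `g`, i.e. a positive rational
multiple of `g` with coprime integer entries. -/
def IsRed (g : GL2Q) (m : Matrix (Fin 2) (Fin 2) ℤ) : Prop :=
  (∃ r : ℚ, 0 < r ∧ ∀ i k, (m i k : ℚ) = r * mEntry g i k) ∧
    Int.gcd (Int.gcd (m 0 0) (m 0 1)) (Int.gcd (m 1 0) (m 1 1)) = 1

/-- `DetRed g N`: the determinant of the reduced form of `g` is `N`. -/
def DetRed (g : GL2Q) (N : ℤ) : Prop := ∃ m, IsRed g m ∧ m.det = N

/-- A `j`-field: a field of characteristic zero together with a domain `D` closed under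
the `GL₂(ℚ)`-action and functions `j, j', j'', j'''` satisfying the axioms of the
modular `j`-function (the differential equation, the modular-polynomial axioms and the
axiom on the singular values of `j`). -/
structure JField (K : Type*) [Field K] [CharZero K] where
  D : Set K
  j : K → K
  j' : K → K
  j'' : K → K
  j''' : K → K
  /-- The family of modular polynomials `Φ_N`. -/
  Φ : ℕ → MvPolynomial (Fin 2) ℤ
  D_closed : ∀ z ∈ D, ∀ g : GL2Q, moebDen g z ≠ 0 ∧ moeb g z ∈ D
  deq : ∀ z ∈ D, j z ≠ 0 → j z ≠ 1728 → j' z ≠ 0 →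
    j''' z / j' z - (3/2) * (j'' z / j' z)^2
      + ((j z)^2 - 1968 * j z + 2654208) / (2 * (j z)^2 * (j z - 1728)^2) * (j' z)^2 = 0
  mod_iff : ∀ z₁ ∈ D, ∀ z₂ ∈ D, ∀ N : ℕ, 0 < N →
    (MvPolynomial.aeval ![j z₁, j z₂] (Φ N) = 0 ↔
      ∃ g : GL2Q, DetRed g (N : ℤ) ∧ MoebRel g z₂ z₁)
  sing : ∀ z ∈ D, (j z = 0 ∨ j z = 1728 ∨ j' z = 0) →
    ∃ g : GL2Q, ¬ IsScalarMat g ∧ MoebRel g z z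

namespace JField

variable (F : JField K)

/-- A point of the domain is special if `Φ_N(j(z), j(z)) = 0` for some `N > 1`. -/
def Special (z : K) : Prop :=
  ∃ N : ℕ, 1 < N ∧ MvPolynomial.aeval ![F.j z, F.j z] (F.Φ N) = 0

/-- `J(S) = j(S) ∪ j'(S) ∪ j''(S)`. -/
def JImage (S : Set K) : Set K := F.j '' S ∪ F.j' '' S ∪ F.j'' '' S

/-- A `j`-derivation: a derivation `der` with `der(j⁽ᵗ⁾(z)) = j⁽ᵗ⁺¹⁾(z)·derz` for `z ∈ D`. -/
def IsJDer (der : Derivation ℚ K K) : Prop :=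
  ∀ z ∈ F.D, der (F.j z) = F.j' z * der z ∧ der (F.j' z) = F.j'' z * der z ∧
    der (F.j'' z) = F.j''' z * der z

/-- The `j`-closure of `X`: the intersection of the kernels of all `j`-derivations
vanishing on `X`. -/
def jcl (X : Set K) : Set K :=
  {a | ∀ der : Derivation ℚ K K, F.IsJDer der → (∀ x ∈ X, der x = 0) → der a = 0}

/-- The `j`-closure of a set, as a subfield. -/
def jclSubfield (X : Set K) : Subfield K where
  carrier := F.jcl X
  zero_mem' := fun der _ _ => by simp
  one_mem' := fun der _ _ => by simp
  add_mem' := fun ha hb der hj hX => by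
    rw [map_add, ha der hj hX, hb der hj hX, add_zero]
  mul_mem' := fun {a b} ha hb der hj hX => by
    rw [Derivation.leibniz, ha der hj hX, hb der hj hX]; simp
  neg_mem' := fun {a} ha der hj hX => by rw [map_neg, ha der hj hX, neg_zero]
  inv_mem' := fun a ha der hj hX => by
    rw [Derivation.leibniz_inv, ha der hj hX]; simp

end JField

/-- The transcendence degree of the field generated by `A` over the subfield `Fb`:
the least size of a finite subset `S ⊆ A` such that every element of `A` is algebraic
over `Fb(S)` (`⊤` if there is no such set). -/
def trdegNat (Fb : Subfield K) (A : Set K) : ℕ∞ :=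
  sInf {n : ℕ∞ | ∃ S : Finset K, ↑S ⊆ A ∧ (S.card : ℕ∞) = n ∧
    ∀ a ∈ A, IsAlgebraic (Subfield.closure ((Fb : Set K) ∪ ↑S)) a}

/-- The dimension of `A` over `B` in the pregeometry `Gcl`: the least size of a finite
subset `S ⊆ A` with `A ⊆ Gcl(S ∪ B)`. -/
def Gdim (A B : Set K) : ℕ∞ :=
  sInf {n : ℕ∞ | ∃ S : Finset K, ↑S ⊆ A ∧ (S.card : ℕ∞) = n ∧ A ⊆ Gcl (↑S ∪ B)}

namespace JField

variable (F : JField K)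

/-- The dimension of `A` over `B` in the pregeometry `jcl`. -/
def jdim (A B : Set K) : ℕ∞ :=
  sInf {n : ℕ∞ | ∃ S : Finset K, ↑S ⊆ A ∧ (S.card : ℕ∞) = n ∧ A ⊆ F.jcl (↑S ∪ B)}

end JField

/-- A `j`-subfield of a `j`-field `(K, D)`: a subfield `A` together with a subset
`D_A ⊆ D ∩ A` closed under the `GL₂(ℚ)`-action, such that `A` is closed under
`j, j', j'', j'''` on `D_A`. -/
structure JSubfield (F : JField K) where
  carrier : Subfield K
  dom : Set K
  dom_subset : dom ⊆ F.D
  dom_mem : ∀ z ∈ dom, z ∈ carrier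
  dom_closed : ∀ z ∈ dom, ∀ g : GL2Q, moeb g z ∈ dom
  jmem : ∀ z ∈ dom, F.j z ∈ carrier ∧ F.j' z ∈ carrier ∧ F.j'' z ∈ carrier ∧
    F.j''' z ∈ carrier

namespace JSubfield

variable {F : JField K}

/-- Inclusion of `j`-subfields. -/
def le (A B : JSubfield F) : Prop := A.carrier ≤ B.carrier ∧ A.dom ⊆ B.dom

/-- Union (compositum) of two `j`-subfields. -/
def union (A B : JSubfield F) : JSubfield F where
  carrier := A.carrier ⊔ B.carrier
  dom := A.dom ∪ B.dom
  dom_subset := Set.union_subset A.dom_subset B.dom_subset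
  dom_mem := by
    rintro z (hz | hz)
    · exact SetLike.le_def.mp le_sup_left (A.dom_mem z hz)
    · exact SetLike.le_def.mp le_sup_right (B.dom_mem z hz)
  dom_closed := by
    rintro z (hz | hz) g
    · exact Or.inl (A.dom_closed z hz g)
    · exact Or.inr (B.dom_closed z hz g)
  jmem := by
    rintro z (hz | hz)
    · obtain ⟨h1, h2, h3, h4⟩ := A.jmem z hz
      exact ⟨SetLike.le_def.mp le_sup_left h1, SetLike.le_def.mp le_sup_left h2,
        SetLike.le_def.mp le_sup_left h3, SetLike.le_def.mp le_sup_left h4⟩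
    · obtain ⟨h1, h2, h3, h4⟩ := B.jmem z hz
      exact ⟨SetLike.le_def.mp le_sup_right h1, SetLike.le_def.mp le_sup_right h2,
        SetLike.le_def.mp le_sup_right h3, SetLike.le_def.mp le_sup_right h4⟩

/-- Intersection of two `j`-subfields. -/
def inter (A B : JSubfield F) : JSubfield F where
  carrier := A.carrier ⊓ B.carrier
  dom := A.dom ∩ B.dom
  dom_subset := fun z hz => A.dom_subset hz.1
  dom_mem := fun z hz => ⟨A.dom_mem z hz.1, B.dom_mem z hz.2⟩
  dom_closed := fun z hz g => ⟨A.dom_closed z hz.1 g, B.dom_closed z hz.2 g⟩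
  jmem := fun z hz => by
    obtain ⟨a1, a2, a3, a4⟩ := A.jmem z hz.1
    obtain ⟨b1, b2, b3, b4⟩ := B.jmem z hz.2
    exact ⟨⟨a1, b1⟩, ⟨a2, b2⟩, ⟨a3, b3⟩, ⟨a4, b4⟩⟩

end JSubfield

namespace JField

variable (F : JField K)

/-- `A` is a `j`-subfield finitely generated over `Cs`: `A` is the smallest
`j`-subfield containing `Cs` and some finite set `X`. -/
def FinGenOver (Cs A : JSubfield F) : Prop :=
  Cs.le A ∧ ∃ X : Finset K, ↑X ⊆ (A.carrier : Set K) ∧ (↑X ∩ F.D ⊆ A.dom) ∧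
    ∀ B : JSubfield F, Cs.le B → ↑X ⊆ (B.carrier : Set K) → (↑X ∩ F.D ⊆ B.dom) → A.le B

/-- The predimension `δ_j(A | Cs) = tr.deg._Cs A − 3·dim_G(D_A | D_Cs)`. -/
def delta (Cs A : JSubfield F) : ℤ :=
  ((trdegNat Cs.carrier (A.carrier : Set K)).toNat : ℤ)
    - 3 * ((Gdim A.dom Cs.dom).toNat : ℤ)

/-- The predimension of a finite tuple `z` over a `j`-subfield `A`:
`tr.deg._A A(z, J(z)) − 3·dim_G(z | D_A)`. -/
def deltaTuple (A : JSubfield F) (z : Finset K) : ℤ :=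
  ((trdegNat A.carrier ((↑z : Set K) ∪ F.JImage ↑z)).toNat : ℤ)
    - 3 * ((Gdim (↑z : Set K) A.dom).toNat : ℤ)

/-- Self-sufficiency of an extension of `j`-subfields: `A ⊴ B` iff `A ≤ B` and
`δ_j(z | A) ≥ 0` for all finite tuples `z` from `D_B`. -/
def SelfSuff (A B : JSubfield F) : Prop :=
  A.le B ∧ ∀ z : Finset K, (↑z : Set K) ⊆ B.dom → 0 ≤ F.deltaTuple A z

/-- Self-sufficiency of a `j`-subfield in the ambient `j`-field `(K, D)`. -/
def SelfSuffAmb (A : JSubfield F) : Prop :=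
  ∀ z : Finset K, (↑z : Set K) ⊆ F.D → 0 ≤ F.deltaTuple A z

/-- The ambient `j`-field is graph-generated by `J`. -/
def GraphGenAmb : Prop := Subfield.closure (F.D ∪ F.JImage F.D) = ⊤

/-- A `j`-subfield is graph-generated by `J`. -/
def GraphGen (A : JSubfield F) : Prop :=
  A.carrier = Subfield.closure (A.dom ∪ F.JImage A.dom)

/-- Evaluation map for `j`-polynomials: the variable `(i, 0)` is sent to `aᵢ`, and
`(i, 1), (i, 2), (i, 3)` to `j(aᵢ), j'(aᵢ), j''(aᵢ)`. -/
def jVal {n : ℕ} (a : Fin n → K) : Fin n × Fin 4 → K :=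
  fun p => ![a p.1, F.j (a p.1), F.j' (a p.1), F.j'' (a p.1)] p.2

/-- The formal partial derivative `derf/derXᵢ` of a `j`-polynomial, evaluated at `a`,
where `j, j', j''` are differentiated by the chain rule. -/
def jpderivEval {n : ℕ} (i : Fin n) (f : MvPolynomial (Fin n × Fin 4) K)
    (a : Fin n → K) : K :=
  MvPolynomial.eval (F.jVal a) (MvPolynomial.pderiv (i, (0 : Fin 4)) f)
  + F.j' (a i) * MvPolynomial.eval (F.jVal a) (MvPolynomial.pderiv (i, (1 : Fin 4)) f)
  + F.j'' (a i) * MvPolynomial.eval (F.jVal a) (MvPolynomial.pderiv (i, (2 : Fin 4)) f)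
  + F.j''' (a i) * MvPolynomial.eval (F.jVal a) (MvPolynomial.pderiv (i, (3 : Fin 4)) f)

/-- `a` is a solution of the Khovanskii system of `j`-polynomials `f` over `B`:
the `fᵢ` have coefficients in the subring generated by `B`, vanish at `a`, and the
Jacobian determinant of formal `j`-polynomial partial derivatives does not vanish at `a`. -/
def IsKhovanskiiSol (B : Set K) {n : ℕ}
    (f : Fin n → MvPolynomial (Fin n × Fin 4) K) (a : Fin n → K) : Prop :=
  (∀ i m, (f i).coeff m ∈ Subring.closure B) ∧
  (∀ i, MvPolynomial.eval (F.jVal a) (f i) = 0) ∧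
  (Matrix.of fun i k => F.jpderivEval k (f i) a).det ≠ 0

/-- The Khovanskii closure `kcl(B)`: elements which are the first coordinate of a
non-singular solution of a Khovanskii system of `j`-polynomials over `B`. -/
def kcl (B : Set K) : Set K :=
  {a | ∃ (n : ℕ) (f : Fin (n+1) → MvPolynomial (Fin (n+1) × Fin 4) K)
    (x : Fin (n+1) → K), x 0 = a ∧ F.IsKhovanskiiSol B f x}

end JField

/-- `z` is a `Gcl`-basis of `Ddom` over `B`: the coordinates of `z` lie in `Ddom`,
span `Ddom` over `B`, and are `Gcl`-independent over `B`. -/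
def IsGclBasis {n : ℕ} (z : Fin n → K) (Ddom B : Set K) : Prop :=
  (∀ i, z i ∈ Ddom) ∧ Ddom ⊆ Gcl (Set.range z ∪ B) ∧
  ∀ i, z i ∉ Gcl ((Set.range z \ {z i}) ∪ B)


namespace JField

variable (F : JField K)

/-- The predimension of a finite set `X` over `(C, D_C)` with `C = jcl(∅)`:
`δ_j(X) = tr.deg._C C(X, J(dom)) − 3·dim_G(X ∩ D | D_C)`, where `dom = Gcl((X ∩ D) ∪ D_C)`
is the domain of the `j`-subfield generated by `X` over `(C, D_C)`. -/
def deltaFinset (X : Finset K) : ℤ :=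
  ((trdegNat (F.jclSubfield ∅)
      ((↑X : Set K) ∪ F.JImage (Gcl (((↑X : Set K) ∩ F.D) ∪ (F.jcl ∅ ∩ F.D))))).toNat : ℤ)
    - 3 * ((Gdim ((↑X : Set K) ∩ F.D) (F.jcl ∅ ∩ F.D)).toNat : ℤ)

end JField

end
/-- If `D ⊆ K` is closed under the `GL₂(ℚ)`-action with `D ∩ ℚ = ∅`,
and a non-scalar `g ∈ GL₂(ℚ)` fixes `z ∈ D`, then some `h ∈ GL₂(ℚ)` fixes `z` with
`det(red(h)) > 1`. -/
theorem exists_fix_detRed_gt_one {K : Type*} [Field K] [CharZero K] (D : Set K)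
    (hclosed : ∀ z ∈ D, ∀ g : GL2Q, moebDen g z ≠ 0 ∧ moeb g z ∈ D)
    (hQ : ∀ q : ℚ, (q : K) ∉ D)
    (z : K) (hz : z ∈ D) (g : GL2Q) (hg : ¬ IsScalarMat g) (hfix : MoebRel g z z) :
    ∃ (h : GL2Q) (m : Matrix (Fin 2) (Fin 2) ℤ),
      MoebRel h z z ∧ IsRed h m ∧ 1 < m.det := by
  obtain ⟨hden, hmoeb⟩ := hfix
  rw [moeb, div_eq_iff hden] at hmoeb
  unfold moebNum moebDen at hmoeb
  unfold moebDen at hden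
  set a := mEntry g 0 0 with ha
  set b := mEntry g 0 1 with hb
  set c := mEntry g 1 0 with hc
  set d := mEntry g 1 1 with hd
  -- quadratic equation
  have heq : (c : K) * z ^ 2 + ((d - a : ℚ) : K) * z + ((-b : ℚ) : K) = 0 := by
    push_cast
    linear_combination -hmoeb
  have hcne : c ≠ 0 := by
    intro hc0
    rw [hc0] at heq
    push_cast at heq
    by_cases had : d - a = 0
    · apply hg
      refine ⟨a, ?_⟩
      have hb0 : b = 0 := by
        have hdK : (d : K) = (a : K) := by exact_mod_cast sub_eq_zero.mp had
        have : ((b : ℚ) : K) = 0 := by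
          rw [hdK] at heq; linear_combination -heq
        exact_mod_cast this
      have had' : d = a := by linarith [sub_eq_zero.mp had]
      have h00 : (g : Matrix (Fin 2) (Fin 2) ℚ) 0 0 = a := rfl
      have h01 : (g : Matrix (Fin 2) (Fin 2) ℚ) 0 1 = b := rfl
      have h10 : (g : Matrix (Fin 2) (Fin 2) ℚ) 1 0 = c := rfl
      have h11 : (g : Matrix (Fin 2) (Fin 2) ℚ) 1 1 = d := rfl
      ext i k
      fin_cases i <;> fin_cases k <;>
        simp [Matrix.smul_apply, Matrix.one_apply, h00, h01, h10, h11, hb0, hc0, had']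
    · have hda : ((d - a : ℚ) : K) ≠ 0 := by exact_mod_cast had
      have hda' : (d : K) - (a : K) ≠ 0 := by
        intro h0
        apply had
        have : ((d - a : ℚ) : K) = 0 := by push_cast; linear_combination h0
        exact_mod_cast this
      have hzq : z = ((b / (d - a) : ℚ) : K) := by
        push_cast
        rw [eq_div_iff hda']
        linear_combination heq
      exact hQ _ (hzq ▸ hz)
  -- integer coefficients
  set B : ℚ := d - a with hB
  set A : ℚ := -b with hA
  set p : ℤ := c.num * (B.den * A.den) with hp
  set q : ℤ := B.num * (c.den * A.den) with hq
  set r : ℤ := A.num * (c.den * B.den) with hr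
  have hcden : ((c.den : ℚ)) ≠ 0 := by exact_mod_cast c.den_nz
  have hBden : ((B.den : ℚ)) ≠ 0 := by exact_mod_cast B.den_nz
  have hAden : ((A.den : ℚ)) ≠ 0 := by exact_mod_cast A.den_nz
  have hpQ : (p : ℚ) = c * (c.den * B.den * A.den) := by
    have hcn : (c.num : ℚ) = c * c.den := (Rat.mul_den_eq_num c).symm
    rw [hp]; push_cast; rw [hcn]; ring
  have hqQ : (q : ℚ) = B * (c.den * B.den * A.den) := by
    have hcn : (B.num : ℚ) = B * B.den := (Rat.mul_den_eq_num B).symm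
    rw [hq]; push_cast; rw [hcn]; ring
  have hrQ : (r : ℚ) = A * (c.den * B.den * A.den) := by
    have hcn : (A.num : ℚ) = A * A.den := (Rat.mul_den_eq_num A).symm
    rw [hr]; push_cast; rw [hcn]; ring
  have hpne : p ≠ 0 := by
    rw [hp]
    have : c.num ≠ 0 := Rat.num_ne_zero.mpr hcne
    positivity
  -- quadratic with integer coefficients in K
  have hK : (p : K) * z ^ 2 + (q : K) * z + (r : K) = 0 := by
    have e1 : ((p : ℤ) : K) = (c : K) * ((c.den * B.den * A.den : ℚ) : K) := by
      rw [show ((p : ℤ) : K) = (((p : ℤ) : ℚ) : K) by push_cast; ring, hpQ]; push_cast; ring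
    have e2 : ((q : ℤ) : K) = ((B : ℚ) : K) * ((c.den * B.den * A.den : ℚ) : K) := by
      rw [show ((q : ℤ) : K) = (((q : ℤ) : ℚ) : K) by push_cast; ring, hqQ]; push_cast; ring
    have e3 : ((r : ℤ) : K) = ((A : ℚ) : K) * ((c.den * B.den * A.den : ℚ) : K) := by
      rw [show ((r : ℤ) : K) = (((r : ℤ) : ℚ) : K) by push_cast; ring, hrQ]; push_cast; ring
    rw [e1, e2, e3, hB, hA]
    linear_combination ((c.den * B.den * A.den : ℚ) : K) * heq
  -- the new matrix
  set t : ℤ := 1 + p ^ 2 * (|q| + |p * r| + 2) with ht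
  have hpabs : (1 : ℤ) ≤ p ^ 2 := by
    have := hpne; nlinarith [sq_nonneg p, Int.one_le_abs (by simpa using hpne), sq_abs p]
  have htbig : |q| + |p * r| + 3 ≤ t := by
    rw [ht]
    nlinarith [abs_nonneg q, abs_nonneg (p * r)]
  set m : Matrix (Fin 2) (Fin 2) ℤ := !![t - q, -r; p, t] with hm
  have hdetm : 1 < m.det := by
    rw [hm, Matrix.det_fin_two_of]
    have h1 : q ≤ |q| := le_abs_self q
    have h2 : -(|p * r|) ≤ p * r := neg_abs_le (p * r)
    nlinarith [abs_nonneg q, abs_nonneg (p * r)]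
  set Aq : Matrix (Fin 2) (Fin 2) ℚ := m.map (Int.cast) with hAq
  have hAqdet : Aq.det ≠ 0 := by
    have : Aq.det = ((m.det : ℤ) : ℚ) := by
      rw [hAq]
      exact (RingHom.map_det (Int.castRingHom ℚ) m).symm
    rw [this]
    exact_mod_cast (by omega : m.det ≠ 0)
  refine ⟨Matrix.GeneralLinearGroup.mkOfDetNeZero Aq hAqdet, m, ?_, ?_, hdetm⟩
  · -- MoebRel
    have hent : ∀ i k, mEntry (Matrix.GeneralLinearGroup.mkOfDetNeZero Aq hAqdet) i k
        = ((m i k : ℤ) : ℚ) := by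
      intro i k; rfl
    have hdenz : moebDen (Matrix.GeneralLinearGroup.mkOfDetNeZero Aq hAqdet) z ≠ 0 := by
      unfold moebDen
      rw [hent 1 0, hent 1 1]
      intro h0
      have hm10 : m 1 0 = p := by rw [hm]; rfl
      have hm11 : m 1 1 = t := by rw [hm]; rfl
      rw [hm10, hm11] at h0
      have hpK : ((p : ℚ) : K) ≠ 0 := by
        exact_mod_cast (by exact_mod_cast hpne : ((p : ℤ) : ℚ) ≠ 0)
      have hpK3 : ((p : ℤ) : K) ≠ 0 := by exact_mod_cast hpne
      have hzq : z = (((-t : ℤ) / (p : ℤ) : ℚ) : K) := by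
        push_cast at h0 ⊢
        rw [eq_div_iff hpK3]
        linear_combination h0
      exact hQ _ (hzq ▸ hz)
    refine ⟨hdenz, ?_⟩
    rw [moeb, div_eq_iff hdenz]
    unfold moebNum moebDen
    rw [hent 0 0, hent 0 1, hent 1 0, hent 1 1]
    have e00 : m 0 0 = t - q := by rw [hm]; rfl
    have e01 : m 0 1 = -r := by rw [hm]; rfl
    have e10 : m 1 0 = p := by rw [hm]; rfl
    have e11 : m 1 1 = t := by rw [hm]; rfl
    rw [e00, e01, e10, e11]
    push_cast
    linear_combination -hK
  · -- IsRed
    constructor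
    · refine ⟨1, one_pos, fun i k => ?_⟩
      have hent : mEntry (Matrix.GeneralLinearGroup.mkOfDetNeZero Aq hAqdet) i k
          = ((m i k : ℤ) : ℚ) := rfl
      rw [hent, one_mul]
    · have e00 : m 0 0 = t - q := by rw [hm]; rfl
      have e01 : m 0 1 = -r := by rw [hm]; rfl
      have e10 : m 1 0 = p := by rw [hm]; rfl
      have e11 : m 1 1 = t := by rw [hm]; rfl
      rw [e00, e01, e10, e11]
      have hcop : Int.gcd p t = 1 := by
        have : IsCoprime p t := ⟨-(p * (|q| + |p * r| + 2)), 1, by rw [ht]; ring⟩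
        exact Int.isCoprime_iff_gcd_eq_one.mp this
      rw [hcop]
      simp [Int.gcd]
end

section
/- Let (K, D) be a j-field, F ⊆ K a jcl-closed subfield, and z ∈ D. Then: (a) if z ∈ F then j(z), j'(z), j''(z) ∈ F; (b) if any one of j(z), j'(z), j''(z) lies in F, then z ∈ F. (Proof via the Ax–Schanuel inequality: tr.deg._F F(z, j(z), j'(z), j''(z)) ≥ 3·dim_G(z|F) + dim^j(z|F), whose right-hand side is 0 or 4 when F is jcl-closed.) -/
/-!
Part (a) is the chain rule. For (b), let `∂` be a `j`-derivation vanishing on `F` with `∂z ≠ 0`.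
A derivation in characteristic zero kills every element that is algebraic over its constants, so
`z` is transcendental over `ℚ`; by the axiom on fixed points of non-scalar matrices this gives
`j(z) ∉ {0, 1728}` and `j'(z) ≠ 0`, hence `∂j(z) = j'(z)∂z ≠ 0` and `j(z)` is transcendental too.
If `∂j'(z) = 0` then `j''(z) = j'''(z) = 0`, and the differential equation makes `j(z)` a root of
`X² - 1968X + 2654208`. If `∂j''(z) = 0` then `j'''(z) = 0`, so `j'(z)² - 2j''(z)j(z)` is a
constant of `∂`, and substituting it into the differential equation yields a nonzero quartic
over the constants of `∂` with root `j(z)`, contradicting `∂j(z) ≠ 0`.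
-/

open Polynomial

namespace Derivation

variable {R K : Type*} [CommRing R] [Field K] [Algebra R K] (d : Derivation R K K)

@[simp]
theorem map_ofNat (n : ℕ) [n.AtLeastTwo] : d (ofNat(n) : K) = 0 :=
  d.map_natCast n

theorem map_eval_of_mapCoeffs_eq_zero {p : K[X]} (hp : d.mapCoeffs p = 0) (x : K) :
    d (p.eval x) = (derivative p).eval x * d x := by
  simp [apply_eval_eq, hp]

theorem mapCoeffs_derivative_eq_zero {p : K[X]} (hp : d.mapCoeffs p = 0) :
    d.mapCoeffs (derivative p) = 0 := by
  ext i
  have hi : d (p.coeff (i + 1)) = 0 := by simpa using congrArg (·.coeff (i + 1)) hp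
  simp [coeff_derivative, hi, d.map_natCast]

variable [CharZero K]

theorem eq_zero_of_eval_eq_zero {x : K} (hx : d x ≠ 0) {p : K[X]} (hp : d.mapCoeffs p = 0)
    (h : p.eval x = 0) : p = 0 := by
  induction hn : p.natDegree generalizing p with
  | zero => rw [eq_C_of_natDegree_eq_zero hn] at h ⊢; simpa using h
  | succ n ih =>
    have h' : (derivative p).eval x = 0 := by
      simpa [hx, h] using (d.map_eval_of_mapCoeffs_eq_zero hp x).symm
    have hp' := ih (d.mapCoeffs_derivative_eq_zero hp) h' (by simp [natDegree_derivative, hn])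
    simp [hn] at hp'

theorem map_eq_zero_of_isAlgebraic {k : Type*} [Field k] [Algebra k K] (d : Derivation k K K)
    {x : K} (hx : IsAlgebraic k x) : d x = 0 := by
  obtain ⟨p, hp0, hpx⟩ := hx
  by_contra hdx
  refine hp0 (map_injective _ (algebraMap k K).injective ?_)
  refine (d.eq_zero_of_eval_eq_zero hdx ?_ ?_).trans (Polynomial.map_zero _).symm
  · ext i; simp
  · rwa [eval_map_algebraMap]

end Derivation

theorem isAlgebraic_of_moebRel_self {K : Type*} [Field K] [CharZero K] {g : GL2Q}
    (hg : ¬ IsScalarMat g) {z : K} (h : MoebRel g z z) : IsAlgebraic ℚ z := by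
  obtain ⟨hden, hfix⟩ := h
  refine ⟨C (mEntry g 1 0) * X ^ 2 + C (mEntry g 1 1 - mEntry g 0 0) * X - C (mEntry g 0 1),
    fun hp => hg ⟨mEntry g 0 0, ?_⟩, ?_⟩
  · have hc : mEntry g 1 0 = 0 := by simpa using congrArg (coeff · 2) hp
    have hda : mEntry g 1 1 = mEntry g 0 0 := by simpa [sub_eq_zero] using congrArg (coeff · 1) hp
    have hb : mEntry g 0 1 = 0 := by simpa using congrArg (coeff · 0) hp
    ext i k
    simp only [mEntry] at hb hc hda
    fin_cases i <;> fin_cases k <;> simp [mEntry, hb, hc, hda]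
  · rw [moeb, div_eq_iff hden, moebNum, moebDen] at hfix
    simp only [map_sub, map_add, map_mul, aeval_C, aeval_X, map_pow, eq_ratCast]
    linear_combination -hfix

namespace JField

variable {K : Type*} [Field K] [CharZero K] (F : JField K)

theorem relation_of_j'''_eq_zero {z : K} (hz : z ∈ F.D) (h0 : F.j z ≠ 0) (h1728 : F.j z ≠ 1728)
    (hj' : F.j' z ≠ 0) (hj''' : F.j''' z = 0) :
    3 * F.j'' z ^ 2 * F.j z ^ 2 * (F.j z - 1728) ^ 2 =
      (F.j z ^ 2 - 1968 * F.j z + 2654208) * F.j' z ^ 4 := by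
  have h := F.deq z hz h0 h1728 hj'
  rw [hj'''] at h
  have h1728' : F.j z - 1728 ≠ 0 := sub_ne_zero.mpr h1728
  field_simp at h
  linear_combination -h

variable {F} {der : Derivation ℚ K K}

theorem nonsingular_of_map_ne_zero {z : K} (hz : z ∈ F.D) (ht : der z ≠ 0) :
    F.j z ≠ 0 ∧ F.j z ≠ 1728 ∧ F.j' z ≠ 0 := by
  by_contra hsing
  obtain ⟨g, hg, hfix⟩ := F.sing z hz (by tauto)
  exact ht (der.map_eq_zero_of_isAlgebraic (isAlgebraic_of_moebRel_self hg hfix))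

theorem IsJDer.map_j_ne_zero (hder : F.IsJDer der) {z : K} (hz : z ∈ F.D) (ht : der z ≠ 0) :
    der (F.j z) ≠ 0 := by
  rw [(hder z hz).1]
  exact mul_ne_zero (nonsingular_of_map_ne_zero hz ht).2.2 ht

theorem IsJDer.j_sq_sub_ne_zero (hder : F.IsJDer der) {z : K} (hz : z ∈ F.D) (ht : der z ≠ 0) :
    F.j z ^ 2 - 1968 * F.j z + 2654208 ≠ 0 := by
  intro hQ
  refine hder.map_j_ne_zero hz ht (der.map_eq_zero_of_isAlgebraic
    ⟨X ^ 2 - C 1968 * X + C 2654208, ?_, by simpa using hQ⟩)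
  exact Monic.ne_zero (by monicity!)

theorem IsJDer.j''_ne_zero (hder : F.IsJDer der) {z : K} (hz : z ∈ F.D) (ht : der z ≠ 0)
    (hw : F.j''' z = 0) : F.j'' z ≠ 0 := by
  obtain ⟨h0, h1728, hy⟩ := nonsingular_of_map_ne_zero hz ht
  intro hu
  have h := F.relation_of_j'''_eq_zero hz h0 h1728 hy hw
  rw [hu] at h
  exact hder.j_sq_sub_ne_zero hz ht (by simpa [hy] using h.symm)

theorem IsJDer.map_j'_ne_zero (hder : F.IsJDer der) {z : K} (hz : z ∈ F.D) (ht : der z ≠ 0) :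
    der (F.j' z) ≠ 0 := by
  obtain ⟨-, hdy, hdu⟩ := hder z hz
  intro hy'
  have hu : F.j'' z = 0 := by simpa [ht] using hdy.symm.trans hy'
  have hw : F.j''' z = 0 := by simpa [hu, ht] using hdu
  exact hder.j''_ne_zero hz ht hw hu

theorem IsJDer.map_j''_ne_zero (hder : F.IsJDer der) {z : K} (hz : z ∈ F.D) (ht : der z ≠ 0) :
    der (F.j'' z) ≠ 0 := by
  obtain ⟨hdx, hdy, hdu⟩ := hder z hz
  obtain ⟨h0, h1728, hy⟩ := nonsingular_of_map_ne_zero hz ht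
  intro hu'
  have hw : F.j''' z = 0 := by simpa [ht] using hdu.symm.trans hu'
  have hu := hder.j''_ne_zero hz ht hw
  have hrel := F.relation_of_j'''_eq_zero hz h0 h1728 hy hw
  set x := F.j z
  set y := F.j' z
  set u := F.j'' z
  set c := y ^ 2 - 2 * u * x
  have hc : der c = 0 := by
    simp only [c, map_sub, Derivation.leibniz, Derivation.leibniz_pow, hdx, hdy, hu',
      Derivation.map_ofNat, smul_eq_mul, nsmul_eq_mul]
    ring
  set p : K[X] := C (3 * u ^ 2) * X ^ 2 * (X - C 1728) ^ 2 -
    (X ^ 2 - C 1968 * X + C 2654208) * (C c + C (2 * u) * X) ^ 2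
  have hp : p = 0 := by
    refine der.eq_zero_of_eval_eq_zero (x := x) (by rw [hdx]; exact mul_ne_zero hy ht) ?_ ?_
    · simp [p, Derivation.leibniz, Derivation.leibniz_pow, hu', hc]
    · simp only [p, c, eval_sub, eval_mul, eval_add, eval_pow, eval_C, eval_X]
      linear_combination hrel
  -- impossible, as `p(0) = -2654208 c²`, `p(1728) = -2239488 (c + 3456 u)²` and `u ≠ 0`
  have hp0 := congrArg (eval 0) hp
  have hp1728 := congrArg (eval 1728) hp
  simp only [p, eval_sub, eval_mul, eval_pow, eval_C, eval_X, eval_add] at hp0 hp1728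
  norm_num at hp0 hp1728
  rw [hp0] at hp1728
  exact hu (by linear_combination hp1728 / 3456)

end JField

/-- Let `F` be a `jcl`-closed subfield of a `j`-field and `z ∈ D`.
Then (a) `z ∈ F` implies `j(z), j'(z), j''(z) ∈ F`; and (b) if one of
`j(z), j'(z), j''(z)` lies in `F` then `z ∈ F`. -/
theorem jclClosed_mem_iff {K : Type*} [Field K] [CharZero K] (F : JField K)
    (Fs : Subfield K) (hFs : (Fs : Set K) = F.jcl ↑Fs) (z : K) (hz : z ∈ F.D) :
    (z ∈ Fs → F.j z ∈ Fs ∧ F.j' z ∈ Fs ∧ F.j'' z ∈ Fs) ∧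
    ((F.j z ∈ Fs ∨ F.j' z ∈ Fs ∨ F.j'' z ∈ Fs) → z ∈ Fs) := by
  have mem_iff : ∀ a, a ∈ Fs ↔ ∀ der : Derivation ℚ K K, F.IsJDer der →
      (∀ x ∈ (Fs : Set K), der x = 0) → der a = 0 :=
    fun a => Set.ext_iff.mp hFs a
  refine ⟨fun hzF => ?_, fun hJ => (mem_iff z).2 fun der hder hFs0 => ?_⟩
  · have hdz := (mem_iff z).1 hzF
    refine ⟨(mem_iff _).2 ?_, (mem_iff _).2 ?_, (mem_iff _).2 ?_⟩ <;> intro der hder hFs0 <;>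
      simp [hder z hz, hdz der hder hFs0]
  · by_contra ht
    rcases hJ with h | h | h
    · exact hder.map_j_ne_zero hz ht (hFs0 _ h)
    · exact hder.map_j'_ne_zero hz ht (hFs0 _ h)
    · exact hder.map_j''_ne_zero hz ht (hFs0 _ h)
end

section
/- In any j-field (K, D), the k-closure operator kcl satisfies: (a) A ⊆ kcl(A); (b) A ⊆ B implies kcl(A) ⊆ kcl(B); (c) kcl(kcl(A)) = kcl(A); (d) kcl has finite character. -/
/-!
A Khovanskii system stays non-singular when another non-singular system is appended in new
unknowns, because the Jacobian of the combined system is block triangular. This is what makes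
`kcl` idempotent: if the coefficients of a system for `a` involve an element `t ∈ kcl A`, replace
`t` by the unknown of a system for `t` over `A` and append that system; repeating this for the
finitely many such `t` gives a system for `a` over `A`. Finite character holds because the
finitely many coefficients of a system lie in the subring generated by a finite subset of `A`.
-/

open MvPolynomial

theorem Subring.exists_finset_subset_of_mem_closure {R : Type*} [Ring R] {s : Set R} {x : R}
    (hx : x ∈ closure s) : ∃ t : Finset R, ↑t ⊆ s ∧ x ∈ closure (t : Set R) := by
  classical
  induction hx using closure_induction with
  | mem x hx => exact ⟨{x}, by simpa using hx, subset_closure (by simp)⟩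
  | zero => exact ⟨∅, by simp, zero_mem _⟩
  | one => exact ⟨∅, by simp, one_mem _⟩
  | add x y _ _ hx hy =>
    obtain ⟨t, hts, hxt⟩ := hx
    obtain ⟨t', hts', hyt'⟩ := hy
    exact ⟨t ∪ t', by simp [hts, hts'],
      add_mem (closure_mono (by simp) hxt) (closure_mono (by simp) hyt')⟩
  | neg x _ hx =>
    obtain ⟨t, hts, hxt⟩ := hx
    exact ⟨t, hts, neg_mem hxt⟩
  | mul x y _ _ hx hy =>
    obtain ⟨t, hts, hxt⟩ := hx
    obtain ⟨t', hts', hyt'⟩ := hy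
    exact ⟨t ∪ t', by simp [hts, hts'],
      mul_mem (closure_mono (by simp) hxt) (closure_mono (by simp) hyt')⟩

theorem Subring.exists_finset_subset_closure {R : Type*} [Ring R] {s : Set R} {T : Finset R}
    (hT : ↑T ⊆ (closure s : Set R)) :
    ∃ t : Finset R, ↑t ⊆ s ∧ ↑T ⊆ (closure (t : Set R) : Set R) := by
  classical
  choose t hts hxt using fun x : T => exists_finset_subset_of_mem_closure (hT x.2)
  refine ⟨Finset.univ.biUnion t, by simpa using hts, fun x hx => ?_⟩
  exact closure_mono (Finset.coe_subset.mpr (Finset.subset_biUnion_of_mem t (Finset.mem_univ _)))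
    (hxt ⟨x, hx⟩)

theorem Option.elim_injective {α β : Type*} {f : α → β} {b : β} (hf : Function.Injective f)
    (hb : b ∉ Set.range f) : Function.Injective fun o : Option α => o.elim b f := by
  rintro (_ | a) (_ | a') h
  · rfl
  · exact absurd ⟨a', h.symm⟩ hb
  · exact absurd ⟨a, h⟩ hb
  · exact congrArg some (hf h)

theorem Fin.natAdd_notMem_range_castAdd {n m : ℕ} (k : Fin m) :
    Fin.natAdd n k ∉ Set.range (Fin.castAdd m : Fin n → Fin (n + m)) := by
  rintro ⟨i, hi⟩
  have := congrArg Fin.val hi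
  simp only [Fin.val_castAdd, Fin.val_natAdd] at this
  omega

theorem Fin.castAdd_notMem_range_natAdd {n m : ℕ} (i : Fin n) :
    Fin.castAdd m i ∉ Set.range (Fin.natAdd n : Fin m → Fin (n + m)) := by
  rintro ⟨k, hk⟩
  have := congrArg Fin.val hk
  simp only [Fin.val_castAdd, Fin.val_natAdd] at this
  omega

namespace MvPolynomial

variable {R σ τ : Type*} [CommRing R]

theorem coeff_rename_mem {S : Subring R} {g : σ → τ} (hg : Function.Injective g)
    {p : MvPolynomial σ R} (hp : ∀ m, p.coeff m ∈ S) (d : τ →₀ ℕ) :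
    (rename g p).coeff d ∈ S := by
  by_cases h : (rename g p).coeff d = 0
  · rw [h]
    exact zero_mem S
  · obtain ⟨m, rfl, -⟩ := coeff_rename_ne_zero g p d h
    rw [coeff_rename_mapDomain g hg]
    exact hp m

theorem eval_bind₁_optionElim (c : R) (v : σ → R) (q : MvPolynomial (Option σ) R) :
    eval v (bind₁ (fun o => o.elim (C c) X) q) = eval (fun o => o.elim c v) q := by
  have hv : (fun o : Option σ => eval v (o.elim (C c) X)) = fun o => o.elim c v := by
    funext o
    cases o <;> simp
  exact (eval₂Hom_bind₁ (RingHom.id R) v _ q).trans (congrArg (eval · q) hv)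

theorem pderiv_bind₁_optionElim (c : R) (i : σ) (q : MvPolynomial (Option σ) R) :
    pderiv i (bind₁ (fun o => o.elim (C c) X) q) =
      bind₁ (fun o => o.elim (C c) X) (pderiv (some i) q) := by
  induction q using MvPolynomial.induction_on with
  | C a => simp
  | add p q hp hq => simp only [map_add, hp, hq]
  | mul_X p o hp =>
    rcases o with _ | v
    · simp [hp]
    · obtain rfl | h := eq_or_ne i v
      · simp [hp]
      · simp [hp, pderiv_X_of_ne h.symm, pderiv_X_of_ne (Option.some_injective _ |>.ne h.symm)]

theorem exists_bind₁_optionElim_eq {B : Set R} {c : R} {p : MvPolynomial σ R}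
    (hp : ∀ m, p.coeff m ∈ Subring.closure (insert c B)) :
    ∃ q : MvPolynomial (Option σ) R, (∀ m, q.coeff m ∈ Subring.closure B) ∧
      bind₁ (fun o => o.elim (C c) X) q = p := by
  set S := Subring.closure B
  let φ : MvPolynomial (Option σ) S →ₐ[S] MvPolynomial σ R := aeval fun o => o.elim (C c) X
  have hC : Subring.closure (insert c B) ≤ φ.range.toSubring.comap C := by
    refine Subring.closure_le.mpr ?_
    rintro _ (rfl | hb)
    · exact ⟨X none, by simp [φ]⟩
    · exact ⟨C ⟨_, Subring.subset_closure hb⟩,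
        by simp [φ, Algebra.algebraMap_ofSubsemiring_apply]⟩
  have hpφ : p ∈ φ.range := by
    rw [p.as_sum]
    refine Subalgebra.sum_mem _ fun m _ => ?_
    rw [monomial_eq]
    exact mul_mem (hC (hp m))
      (Subalgebra.prod_mem _ fun v _ => pow_mem (φ.mem_range.mpr ⟨X (some v), by simp [φ]⟩) _)
  obtain ⟨q, rfl⟩ := hpφ
  refine ⟨map (algebraMap S R) q,
    fun m => by simp [coeff_map, Algebra.algebraMap_ofSubsemiring_apply], ?_⟩
  rw [← aeval_eq_bind₁, aeval_map_algebraMap]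
  rfl

end MvPolynomial

namespace JField

variable {K : Type*} [Field K] [CharZero K] (F : JField K)

noncomputable def jacobian {n : ℕ} (f : Fin n → MvPolynomial (Fin n × Fin 4) K)
    (a : Fin n → K) : Matrix (Fin n) (Fin n) K :=
  Matrix.of fun i k => F.jpderivEval k (f i) a

section Rename

variable {n N : ℕ} {u : Fin n → Fin N} {a : Fin n → K} {b : Fin N → K}

theorem jVal_comp_prodMap (hba : ∀ i, b (u i) = a i) : F.jVal b ∘ Prod.map u id = F.jVal a := by
  funext ⟨i, r⟩
  simp [jVal, hba]

theorem jVal_comp_optionElim (hba : ∀ i, b (u i) = a i) {w : Fin N} {t : K} (ht : b w = t) :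
    F.jVal b ∘ (fun o => Option.elim o (w, 0) (Prod.map u id)) =
      fun o => Option.elim o t (F.jVal a) := by
  funext o
  cases o with
  | none => exact ht
  | some v => exact congrFun (F.jVal_comp_prodMap hba) v

theorem jpderivEval_rename_prodMap (hu : Function.Injective u) (hba : ∀ i, b (u i) = a i)
    (i : Fin n) (p : MvPolynomial (Fin n × Fin 4) K) :
    F.jpderivEval (u i) (rename (Prod.map u id) p) b = F.jpderivEval i p a := by
  have h : ∀ r : Fin 4, eval (F.jVal b) (pderiv (u i, r) (rename (Prod.map u id) p)) =
      eval (F.jVal a) (pderiv (i, r) p) := fun r => by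
    rw [show (u i, r) = Prod.map u id (i, r) from rfl,
      pderiv_rename (hu.prodMap Function.injective_id), eval_rename, F.jVal_comp_prodMap hba]
  simp only [jpderivEval, h, hba]

theorem injective_optionElim_prodMap (hu : Function.Injective u) {w : Fin N}
    (hw : w ∉ Set.range u) :
    Function.Injective fun o => Option.elim o ((w, 0) : Fin N × Fin 4) (Prod.map u id) := by
  refine Option.elim_injective (hu.prodMap Function.injective_id) ?_
  rintro ⟨⟨i, r⟩, h⟩
  exact hw ⟨i, congrArg Prod.fst h⟩

theorem jpderivEval_rename_optionElim (hu : Function.Injective u) {w : Fin N}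
    (hw : w ∉ Set.range u) (hba : ∀ i, b (u i) = a i) {t : K} (ht : b w = t) (i : Fin n)
    (q : MvPolynomial (Option (Fin n × Fin 4)) K) :
    F.jpderivEval (u i) (rename (fun o => Option.elim o (w, 0) (Prod.map u id)) q) b =
      F.jpderivEval i (bind₁ (fun o => Option.elim o (C t) X) q) a := by
  have h : ∀ r : Fin 4, eval (F.jVal b)
      (pderiv (u i, r) (rename (fun o => Option.elim o (w, 0) (Prod.map u id)) q)) =
      eval (F.jVal a) (pderiv (i, r) (bind₁ (fun o => Option.elim o (C t) X) q)) := fun r => by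
    rw [show (u i, r) = (some (i, r)).elim (w, 0) (Prod.map u id) from rfl,
      pderiv_rename (injective_optionElim_prodMap hu hw), eval_rename,
      F.jVal_comp_optionElim hba ht, pderiv_bind₁_optionElim, eval_bind₁_optionElim]
  simp only [jpderivEval, h, hba]

theorem jpderivEval_rename_of_notMem_range {w : Fin N} (hw : w ∉ Set.range u)
    (p : MvPolynomial (Fin n × Fin 4) K) : F.jpderivEval w (rename (Prod.map u id) p) b = 0 := by
  classical
  have h : ∀ r : Fin 4, pderiv (w, r) (rename (Prod.map u id) p) = 0 := fun r => by
    refine pderiv_eq_zero_of_notMem_vars fun hmem => ?_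
    obtain ⟨⟨i, r'⟩, -, hv⟩ := Finset.mem_image.mp (vars_rename _ p hmem)
    exact hw ⟨i, congrArg Prod.fst hv⟩
  simp [jpderivEval, h]

end Rename

/-- The system `q`, whose extra variable becomes the `k₀`-th unknown of `g`, followed by the
system `g` in new unknowns. -/
noncomputable def substAppend {n m : ℕ} (q : Fin n → MvPolynomial (Option (Fin n × Fin 4)) K)
    (k₀ : Fin m) (g : Fin m → MvPolynomial (Fin m × Fin 4) K) :
    Fin (n + m) → MvPolynomial (Fin (n + m) × Fin 4) K :=
  Fin.append
    (fun i => rename (fun o => Option.elim o (Fin.natAdd n k₀, 0) (Prod.map (Fin.castAdd m) id))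
      (q i))
    (fun k => rename (Prod.map (Fin.natAdd n) id) (g k))

section SubstAppend

variable {n m : ℕ} {q : Fin n → MvPolynomial (Option (Fin n × Fin 4)) K} {k₀ : Fin m}
  {g : Fin m → MvPolynomial (Fin m × Fin 4) K} {x : Fin n → K} {y : Fin m → K}

theorem det_jacobian_substAppend :
    (F.jacobian (substAppend q k₀ g) (Fin.append x y)).det =
      (F.jacobian (fun i => bind₁ (fun o => Option.elim o (C (y k₀)) X) (q i)) x).det *
        (F.jacobian g y).det := by
  rw [← Matrix.det_submatrix_equiv_self finSumFinEquiv]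
  set M := (F.jacobian (substAppend q k₀ g) (Fin.append x y)).submatrix finSumFinEquiv
    finSumFinEquiv
  have h₁₁ : M.toBlocks₁₁ =
      F.jacobian (fun i => bind₁ (fun o => Option.elim o (C (y k₀)) X) (q i)) x := by
    ext i k
    simp only [M, jacobian, substAppend, Matrix.toBlocks₁₁, Matrix.submatrix_apply,
      Matrix.of_apply, finSumFinEquiv_apply_left, Fin.append_left]
    exact F.jpderivEval_rename_optionElim (Fin.castAdd_injective n m)
      (Fin.natAdd_notMem_range_castAdd k₀) (Fin.append_left x y) (Fin.append_right x y k₀) k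
      (q i)
  have h₂₁ : M.toBlocks₂₁ = 0 := by
    ext k i
    simp only [M, jacobian, substAppend, Matrix.toBlocks₂₁, Matrix.submatrix_apply,
      Matrix.of_apply, finSumFinEquiv_apply_left, finSumFinEquiv_apply_right, Fin.append_right,
      Matrix.zero_apply]
    exact F.jpderivEval_rename_of_notMem_range (Fin.castAdd_notMem_range_natAdd i) (g k)
  have h₂₂ : M.toBlocks₂₂ = F.jacobian g y := by
    ext k k'
    simp only [M, jacobian, substAppend, Matrix.toBlocks₂₂, Matrix.submatrix_apply,
      Matrix.of_apply, finSumFinEquiv_apply_right, Fin.append_right]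
    exact F.jpderivEval_rename_prodMap (Fin.natAdd_injective m n) (Fin.append_right x y) k' (g k)
  rw [← Matrix.fromBlocks_toBlocks M, h₂₁, Matrix.det_fromBlocks_zero₂₁, h₁₁, h₂₂]

theorem isKhovanskiiSol_substAppend {B : Set K} {f : Fin n → MvPolynomial (Fin n × Fin 4) K}
    (hf : F.IsKhovanskiiSol (insert (y k₀) B) f x)
    (hq_coeff : ∀ i d, (q i).coeff d ∈ Subring.closure B)
    (hq : ∀ i, bind₁ (fun o => Option.elim o (C (y k₀)) X) (q i) = f i)
    (hg : F.IsKhovanskiiSol B g y) :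
    F.IsKhovanskiiSol B (substAppend q k₀ g) (Fin.append x y) := by
  refine ⟨fun i d => ?_, fun i => ?_, ?_⟩
  · refine Fin.addCases (fun i => ?_) (fun k => ?_) i
    · rw [substAppend, Fin.append_left]
      exact coeff_rename_mem (injective_optionElim_prodMap (Fin.castAdd_injective n m)
        (Fin.natAdd_notMem_range_castAdd k₀)) (hq_coeff i) d
    · rw [substAppend, Fin.append_right]
      exact coeff_rename_mem ((Fin.natAdd_injective m n).prodMap Function.injective_id) (hg.1 k) d
  · refine Fin.addCases (fun i => ?_) (fun k => ?_) i
    · rw [substAppend, Fin.append_left, eval_rename,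
        F.jVal_comp_optionElim (Fin.append_left x y) (Fin.append_right x y k₀),
        ← eval_bind₁_optionElim, hq]
      exact hf.2.1 i
    · rw [substAppend, Fin.append_right, eval_rename, F.jVal_comp_prodMap (Fin.append_right x y)]
      exact hg.2.1 k
  · change (F.jacobian _ _).det ≠ 0
    rw [F.det_jacobian_substAppend, funext hq]
    exact mul_ne_zero hf.2.2 hg.2.2

end SubstAppend

theorem subset_kcl (A : Set K) : A ⊆ F.kcl A := by
  intro a ha
  refine ⟨0, fun _ => X (0, 0) - C a, fun _ => a, rfl, fun _ m => ?_,
    fun _ => by simp [jVal], ?_⟩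
  · rw [coeff_sub, coeff_X, coeff_C]
    refine sub_mem ?_ ?_ <;> split_ifs
    exacts [one_mem _, zero_mem _, Subring.subset_closure ha, zero_mem _]
  · simp [jpderivEval, pderiv_X]

theorem kcl_mono {A B : Set K} (hAB : A ⊆ B) : F.kcl A ⊆ F.kcl B := by
  rintro a ⟨n, f, x, hx, hf_coeff, hf⟩
  exact ⟨n, f, x, hx, fun i m => Subring.closure_mono hAB (hf_coeff i m), hf⟩

theorem exists_finset_of_mem_kcl {A : Set K} {a : K} (ha : a ∈ F.kcl A) :
    ∃ S : Finset K, ↑S ⊆ A ∧ a ∈ F.kcl ↑S := by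
  classical
  obtain ⟨n, f, x, hx, hf_coeff, hf⟩ := ha
  have hT : ↑(Finset.univ.biUnion fun i => (f i).coeffs) ⊆ (Subring.closure A : Set K) := by
    intro c hc
    obtain ⟨i, -, hc⟩ := Finset.mem_biUnion.mp hc
    obtain ⟨m, -, rfl⟩ := mem_coeffs_iff.mp hc
    exact hf_coeff i m
  obtain ⟨S, hSA, hS⟩ := Subring.exists_finset_subset_closure hT
  refine ⟨S, hSA, n, f, x, hx, fun i m => ?_, hf⟩
  by_cases h : (f i).coeff m = 0
  · rw [h]
    exact zero_mem _
  · exact hS (Finset.mem_biUnion.mpr ⟨i, Finset.mem_univ i, coeff_mem_coeffs m h⟩)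

theorem kcl_insert_subset {B : Set K} {t : K} (ht : t ∈ F.kcl B) :
    F.kcl (insert t B) ⊆ F.kcl B := by
  rintro a ⟨n, f, x, rfl, hf⟩
  obtain ⟨m, g, y, rfl, hg⟩ := ht
  choose q hq_coeff hq using fun i => exists_bind₁_optionElim_eq (hf.1 i)
  exact ⟨n + 1 + m, substAppend (n := n + 1) q 0 g, Fin.append (m := n + 1) x y,
    Fin.append_left x y 0, F.isKhovanskiiSol_substAppend hf hq_coeff hq hg⟩

theorem kcl_union_subset {A : Set K} {S : Finset K} (hS : ↑S ⊆ F.kcl A) :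
    F.kcl (↑S ∪ A) ⊆ F.kcl A := by
  classical
  induction S using Finset.induction_on with
  | empty => simp
  | insert t S _ ih =>
    rw [Finset.coe_insert, Set.insert_subset_iff] at hS
    rw [Finset.coe_insert, Set.insert_union]
    exact (F.kcl_insert_subset (F.kcl_mono Set.subset_union_right hS.1)).trans (ih hS.2)

theorem kcl_kcl_subset (A : Set K) : F.kcl (F.kcl A) ⊆ F.kcl A := by
  intro a ha
  obtain ⟨S, hS, haS⟩ := F.exists_finset_of_mem_kcl ha
  exact F.kcl_union_subset hS (F.kcl_mono Set.subset_union_left haS)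

end JField

/-- The Khovanskii closure operator `kcl` of a `j`-field satisfies:
reflexivity, monotonicity, idempotence, and finite character. -/
theorem kcl_closure_properties {K : Type*} [Field K] [CharZero K] (F : JField K) :
    (∀ A : Set K, A ⊆ F.kcl A) ∧
    (∀ A B : Set K, A ⊆ B → F.kcl A ⊆ F.kcl B) ∧
    (∀ A : Set K, F.kcl (F.kcl A) = F.kcl A) ∧
    (∀ (A : Set K) (a : K), a ∈ F.kcl A →
      ∃ S : Finset K, ↑S ⊆ A ∧ a ∈ F.kcl (↑S : Set K)) :=
  ⟨F.subset_kcl, fun _ _ => F.kcl_mono,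
    fun A => (F.kcl_kcl_subset A).antisymm (F.subset_kcl _),
    fun _ _ => F.exists_finset_of_mem_kcl⟩
end

section
/- In a j-field (K, D), if a ∈ K is algebraic over the subring generated by A ⊆ K, then a ∈ kcl(A). In particular, kcl(A) is a relatively algebraically closed subfield of K. -/
section KclAux

open scoped Classical

set_option linter.unusedSectionVars false

namespace JField

variable {K : Type*} [Field K] [CharZero K] (F : JField K)

lemma jVal_comp {n N : ℕ} (emb : Fin n → Fin N) (Y : Fin N → K) :
    F.jVal Y ∘ Prod.map emb id = F.jVal (Y ∘ emb) := by
  funext p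
  rcases p with ⟨i, t⟩
  rfl

lemma jpderivEval_rename {n N : ℕ} {emb : Fin n → Fin N} (hemb : Function.Injective emb)
    (k : Fin n) (f : MvPolynomial (Fin n × Fin 4) K) (Y : Fin N → K) :
    F.jpderivEval (emb k) (MvPolynomial.rename (Prod.map emb id) f) Y
      = F.jpderivEval k f (Y ∘ emb) := by
  have hinj : Function.Injective (Prod.map emb (id : Fin 4 → Fin 4)) :=
    hemb.prodMap Function.injective_id
  have hp : ∀ t : Fin 4,
      MvPolynomial.pderiv (emb k, t) (MvPolynomial.rename (Prod.map emb id) f)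
        = MvPolynomial.rename (Prod.map emb id) (MvPolynomial.pderiv (k, t) f) :=
    fun t => MvPolynomial.pderiv_rename hinj (k, t) f
  show F.jpderivEval (Prod.map emb (id : Fin 4 → Fin 4) (k, 0)).1 _ _ = _
  simp only [JField.jpderivEval, Prod.map_fst, id_eq, hp, MvPolynomial.eval_rename,
    F.jVal_comp emb Y]
  rfl

lemma pderiv_rename_zero {n N : ℕ} (emb : Fin n → Fin N) (v : Fin N × Fin 4)
    (hv : v.1 ∉ Set.range emb) (f : MvPolynomial (Fin n × Fin 4) K) :
    MvPolynomial.pderiv v (MvPolynomial.rename (Prod.map emb id) f) = 0 := by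
  apply MvPolynomial.pderiv_eq_zero_of_notMem_vars
  intro hmem
  obtain ⟨u, _, hequ⟩ := MvPolynomial.mem_vars_rename _ _ hmem
  exact hv ⟨u.1, by rw [← hequ]; rfl⟩

lemma jpderivEval_rename_zero {n N : ℕ} (emb : Fin n → Fin N) (v : Fin N)
    (hv : v ∉ Set.range emb) (f : MvPolynomial (Fin n × Fin 4) K) (Y : Fin N → K) :
    F.jpderivEval v (MvPolynomial.rename (Prod.map emb id) f) Y = 0 := by
  have h0 : ∀ t : Fin 4,
      MvPolynomial.pderiv (v, t) (MvPolynomial.rename (Prod.map emb id) f) = 0 :=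
    fun t => pderiv_rename_zero emb (v, t) hv f
  simp [JField.jpderivEval, h0]

lemma coeff_rename_mem {σ τ : Type*} {emb : σ → τ} (hemb : Function.Injective emb)
    (f : MvPolynomial σ K) (R : Subring K) (hf : ∀ m, f.coeff m ∈ R)
    (m : τ →₀ ℕ) : (MvPolynomial.rename emb f).coeff m ∈ R := by
  by_cases h : (MvPolynomial.rename emb f).coeff m = 0
  · rw [h]; exact R.zero_mem
  · obtain ⟨u, hu, -⟩ := MvPolynomial.coeff_rename_ne_zero _ _ _ h
    rw [← hu, MvPolynomial.coeff_rename_mapDomain _ hemb]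
    exact hf u

lemma tuple_lemma (A : Set K) (s : Finset K) (hs : ↑s ⊆ F.kcl A) :
    ∃ (n : ℕ) (f : Fin n → MvPolynomial (Fin n × Fin 4) K) (x : Fin n → K),
      ↑s ⊆ Set.range x ∧ (∀ i m, (f i).coeff m ∈ Subring.closure A) ∧
      (∀ i, MvPolynomial.eval (F.jVal x) (f i) = 0) ∧
      (Matrix.of fun i k => F.jpderivEval k (f i) x).det ≠ 0 := by
  classical
  induction s using Finset.induction_on with
  | empty =>
      refine ⟨0, Fin.elim0, Fin.elim0, by simp, fun i => i.elim0, fun i => i.elim0, ?_⟩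
      rw [Matrix.det_fin_zero]
      exact one_ne_zero
  | @insert b s hbs ih =>
      have hb : b ∈ F.kcl A := hs (by simp)
      obtain ⟨n, f, x, hxr, hfc, hfe, hfd⟩ := ih (fun c hc => hs (by simp [hc]))
      obtain ⟨m0, g, y, hy0, hgc, hge, hgd⟩ := hb
      have key : ∀ (m : ℕ) (g : Fin m → MvPolynomial (Fin m × Fin 4) K) (y : Fin m → K),
          (∀ i mm, (g i).coeff mm ∈ Subring.closure A) →
          (∀ i, MvPolynomial.eval (F.jVal y) (g i) = 0) →
          ((Matrix.of fun i k => F.jpderivEval k (g i) y).det ≠ 0) →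
          ∃ (N : ℕ) (f' : Fin N → MvPolynomial (Fin N × Fin 4) K) (X : Fin N → K),
            (Set.range x ∪ Set.range y) ⊆ Set.range X ∧
            (∀ i mm, (f' i).coeff mm ∈ Subring.closure A) ∧
            (∀ i, MvPolynomial.eval (F.jVal X) (f' i) = 0) ∧
            (Matrix.of fun i k => F.jpderivEval k (f' i) X).det ≠ 0 := by
        intro m g y hgc hge hgd
        have hembLinj : Function.Injective (Fin.castAdd (n := n) m) :=
          Fin.castAdd_injective n m
        have hembRinj : Function.Injective (Fin.natAdd (m := m) n) := fun i j h => by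
          have := congrArg Fin.val h
          simp only [Fin.natAdd] at this
          exact Fin.ext (by omega)
        have hLR : ∀ k : Fin m, Fin.natAdd n k ∉ Set.range (Fin.castAdd (n := n) m) := by
          rintro k ⟨u, hu⟩
          have := congrArg Fin.val hu
          simp only [Fin.coe_castAdd, Fin.coe_natAdd] at this
          omega
        have hRL : ∀ k : Fin n, Fin.castAdd m k ∉ Set.range (Fin.natAdd (m := m) n) := by
          rintro k ⟨u, hu⟩
          have := congrArg Fin.val hu
          simp only [Fin.coe_castAdd, Fin.coe_natAdd] at this
          omega
        have hXL : Fin.append x y ∘ Fin.castAdd m = x := funext fun i => Fin.append_left x y i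
        have hXR : Fin.append x y ∘ Fin.natAdd n = y := funext fun i => Fin.append_right x y i
        refine ⟨n + m,
          Fin.addCases
            (fun i => MvPolynomial.rename (Prod.map (Fin.castAdd m) id) (f i))
            (fun i => MvPolynomial.rename (Prod.map (Fin.natAdd n) id) (g i)),
          Fin.append x y, ?_, ?_, ?_, ?_⟩
        · rintro c (⟨i, rfl⟩ | ⟨i, rfl⟩)
          · exact ⟨Fin.castAdd m i, Fin.append_left x y i⟩
          · exact ⟨Fin.natAdd n i, Fin.append_right x y i⟩
        · intro i mm
          induction i using Fin.addCases with
          | left i =>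
              simp only [Fin.addCases_left]
              exact coeff_rename_mem (hembLinj.prodMap Function.injective_id) _ _ (hfc i) mm
          | right i =>
              simp only [Fin.addCases_right]
              exact coeff_rename_mem (hembRinj.prodMap Function.injective_id) _ _ (hgc i) mm
        · intro i
          induction i using Fin.addCases with
          | left i =>
              simp only [Fin.addCases_left, MvPolynomial.eval_rename, F.jVal_comp, hXL]
              exact hfe i
          | right i =>
              simp only [Fin.addCases_right, MvPolynomial.eval_rename, F.jVal_comp, hXR]
              exact hge i
        · rw [← Matrix.det_submatrix_equiv_self finSumFinEquiv]
          have hsub : (Matrix.of fun i k => F.jpderivEval k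
                ((Fin.addCases
                  (fun i => MvPolynomial.rename (Prod.map (Fin.castAdd m) id) (f i))
                  (fun i => MvPolynomial.rename (Prod.map (Fin.natAdd n) id) (g i)) :
                    Fin (n + m) → MvPolynomial (Fin (n + m) × Fin 4) K) i)
                (Fin.append x y)).submatrix finSumFinEquiv finSumFinEquiv
              = Matrix.fromBlocks (Matrix.of fun i k => F.jpderivEval k (f i) x) 0 0
                  (Matrix.of fun i k => F.jpderivEval k (g i) y) := by
            ext i k
            rcases i with i | i <;> rcases k with k | k <;>
              simp only [Matrix.submatrix_apply, finSumFinEquiv_apply_left,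
                finSumFinEquiv_apply_right, Matrix.of_apply, Matrix.fromBlocks_apply₁₁,
                Matrix.fromBlocks_apply₁₂, Matrix.fromBlocks_apply₂₁,
                Matrix.fromBlocks_apply₂₂, Matrix.zero_apply,
                Fin.addCases_left, Fin.addCases_right]
            · rw [F.jpderivEval_rename hembLinj, hXL]
            · exact F.jpderivEval_rename_zero _ _ (hLR k) (f i) _
            · exact F.jpderivEval_rename_zero _ _ (hRL k) (g i) _
            · rw [F.jpderivEval_rename hembRinj, hXR]
          rw [hsub, Matrix.det_fromBlocks_zero₂₁]
          exact mul_ne_zero hfd hgd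
      obtain ⟨N, f', X, hXsub, h1, h2, h3⟩ := key (m0 + 1) g y hgc hge hgd
      refine ⟨N, f', X, ?_, h1, h2, h3⟩
      intro c hc
      rcases Finset.mem_insert.mp (by exact_mod_cast hc) with rfl | hcs
      · exact hXsub (Or.inr ⟨0, hy0⟩)
      · obtain ⟨i, hi⟩ := hxr hcs
        exact hXsub (Or.inl ⟨i, hi⟩)

lemma master (A : Set K) (s : Finset K) (hs : ↑s ⊆ F.kcl A) (a : K) (p : Polynomial K)
    (hc : ∀ m, p.coeff m ∈ Subring.closure (A ∪ ↑s))
    (h0 : Polynomial.eval a p = 0)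
    (h1 : Polynomial.eval a (Polynomial.derivative p) ≠ 0) :
    a ∈ F.kcl A := by
  classical
  obtain ⟨n, f, x, hxr, hfc, hfe, hfd⟩ := F.tuple_lemma A s hs
  set z : Fin (n + 1) → K := Fin.cons a x with hzdef
  have hz0 : z 0 = a := rfl
  have hzs : z ∘ Fin.succ = x := funext fun i => by rw [hzdef]; simp
  set S0 : Subring K := Subring.closure A with hS0
  -- subring of polynomials with coefficients in `S0`
  let TA : Subring (MvPolynomial (Fin (n + 1) × Fin 4) K) :=
    { carrier := {q | ∀ m, q.coeff m ∈ S0}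
      zero_mem' := fun m => by rw [MvPolynomial.coeff_zero]; exact S0.zero_mem
      one_mem' := fun m => by
        rw [MvPolynomial.coeff_one]
        split_ifs
        exacts [S0.one_mem, S0.zero_mem]
      add_mem' := fun h1 h2 m => by
        rw [MvPolynomial.coeff_add]; exact S0.add_mem (h1 m) (h2 m)
      neg_mem' := fun h1 m => by
        rw [MvPolynomial.coeff_neg]; exact S0.neg_mem (h1 m)
      mul_mem' := fun h1 h2 m => by
        rw [MvPolynomial.coeff_mul]
        exact Subring.sum_mem _ fun c _ => S0.mul_mem (h1 c.1) (h2 c.2) }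
  -- subring of polynomials killed by the partial derivatives `∂/∂(0,t)`
  let TD : Subring (MvPolynomial (Fin (n + 1) × Fin 4) K) :=
    { carrier := {q | ∀ t : Fin 4, MvPolynomial.pderiv ((0 : Fin (n+1)), t) q = 0}
      zero_mem' := fun t => map_zero _
      one_mem' := fun t => MvPolynomial.pderiv_one
      add_mem' := fun h1 h2 t => by rw [map_add, h1 t, h2 t, add_zero]
      neg_mem' := fun h1 t => by rw [map_neg, h1 t, neg_zero]
      mul_mem' := fun h1 h2 t => by
        rw [MvPolynomial.pderiv_mul, h1 t, h2 t]; simp }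
  set gens : Set (MvPolynomial (Fin (n + 1) × Fin 4) K) :=
    (MvPolynomial.C '' A) ∪
      (Set.range fun i : Fin n =>
        (MvPolynomial.X (Fin.succ i, (0 : Fin 4)) : MvPolynomial (Fin (n + 1) × Fin 4) K))
    with hgens
  have hgensTA : gens ⊆ (TA : Set _) := by
    rintro q (⟨c, hcA, rfl⟩ | ⟨i, rfl⟩)
    · intro m
      rw [MvPolynomial.coeff_C]
      split_ifs
      exacts [Subring.subset_closure hcA, S0.zero_mem]
    · intro m
      rw [MvPolynomial.coeff_X']
      split_ifs
      exacts [S0.one_mem, S0.zero_mem]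
  have hgensTD : gens ⊆ (TD : Set _) := by
    rintro q (⟨c, hcA, rfl⟩ | ⟨i, rfl⟩)
    · intro t; exact MvPolynomial.pderiv_C
    · intro t
      exact MvPolynomial.pderiv_X_of_ne
        (fun h => Fin.succ_ne_zero i (congrArg Prod.fst h))
  have hT'TA : Subring.closure gens ≤ TA := Subring.closure_le.mpr hgensTA
  have hT'TD : Subring.closure gens ≤ TD := Subring.closure_le.mpr hgensTD
  -- every element of `Subring.closure (A ∪ s)` is an evaluation of a polynomial in `closure gens`
  have hmap : Subring.closure (A ∪ (↑s : Set K)) ≤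
      Subring.map (MvPolynomial.eval (F.jVal z)) (Subring.closure gens) := by
    rw [Subring.closure_le]
    rintro c (hcA | hcs)
    · exact Subring.mem_map.mpr ⟨MvPolynomial.C c,
        Subring.subset_closure (Or.inl ⟨c, hcA, rfl⟩), MvPolynomial.eval_C c⟩
    · obtain ⟨i, hi⟩ := hxr hcs
      refine Subring.mem_map.mpr ⟨MvPolynomial.X (Fin.succ i, (0 : Fin 4)),
        Subring.subset_closure (Or.inr ⟨i, rfl⟩), ?_⟩
      rw [MvPolynomial.eval_X]
      show z (Fin.succ i) = c
      rw [hzdef, Fin.cons_succ]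
      exact hi
  have hq : ∀ k : ℕ, ∃ q ∈ Subring.closure gens,
      MvPolynomial.eval (F.jVal z) q = p.coeff k := fun k => Subring.mem_map.mp (hmap (hc k))
  choose q hqT hqE using hq
  set d := p.natDegree with hd
  set X0 : MvPolynomial (Fin (n + 1) × Fin 4) K :=
    MvPolynomial.X ((0 : Fin (n + 1)), (0 : Fin 4)) with hX0
  set f0 : MvPolynomial (Fin (n + 1) × Fin 4) K :=
    ∑ k ∈ Finset.range (d + 1), q k * X0 ^ k with hf0
  have hEX0 : MvPolynomial.eval (F.jVal z) X0 = a := by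
    rw [hX0, MvPolynomial.eval_X]
    exact hz0
  have hEf0 : MvPolynomial.eval (F.jVal z) f0 = Polynomial.eval a p := by
    rw [hf0, map_sum, Polynomial.eval_eq_sum_range]
    refine Finset.sum_congr rfl fun k _ => ?_
    rw [map_mul, map_pow, hqE, hEX0]
  have hpd : ∀ t : Fin 4, t ≠ 0 → MvPolynomial.pderiv ((0 : Fin (n+1)), t) f0 = 0 := by
    intro t ht
    rw [hf0, map_sum]
    refine Finset.sum_eq_zero fun k _ => ?_
    rw [MvPolynomial.pderiv_mul, hT'TD (hqT k) t, MvPolynomial.pderiv_pow,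
      MvPolynomial.pderiv_X_of_ne (fun h => ht (congrArg Prod.snd h).symm)]
    ring
  have hpd0 : MvPolynomial.eval (F.jVal z)
      (MvPolynomial.pderiv ((0 : Fin (n+1)), (0 : Fin 4)) f0)
      = Polynomial.eval a (Polynomial.derivative p) := by
    have hstep : MvPolynomial.pderiv ((0 : Fin (n+1)), (0 : Fin 4)) f0
        = ∑ k ∈ Finset.range (d + 1),
            q k * ((k : MvPolynomial (Fin (n + 1) × Fin 4) K) * X0 ^ (k - 1)) := by
      rw [hf0, map_sum]
      refine Finset.sum_congr rfl fun k _ => ?_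
      rw [MvPolynomial.pderiv_mul, hT'TD (hqT k) 0, MvPolynomial.pderiv_pow, hX0,
        MvPolynomial.pderiv_X_self]
      ring
    rw [hstep, map_sum]
    have hterm : ∀ k : ℕ, MvPolynomial.eval (F.jVal z)
        (q k * ((k : MvPolynomial (Fin (n + 1) × Fin 4) K) * X0 ^ (k - 1)))
        = p.coeff k * ((k : K) * a ^ (k - 1)) := fun k => by
      rw [map_mul, map_mul, map_natCast, map_pow, hqE, hEX0]
    rw [Finset.sum_congr rfl fun k _ => hterm k]
    have hL : ∑ k ∈ Finset.range (d + 1), p.coeff k * ((k : K) * a ^ (k - 1))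
        = ∑ k ∈ Finset.range d, p.coeff (k + 1) * (((k + 1 : ℕ) : K) * a ^ k) := by
      rw [Finset.sum_range_succ' (fun k => p.coeff k * ((k : K) * a ^ (k - 1))) d]
      simp
    rw [hL]
    have hR : Polynomial.eval a (Polynomial.derivative p)
        = ∑ k ∈ Finset.range (d + 1), (Polynomial.derivative p).coeff k * a ^ k :=
      Polynomial.eval_eq_sum_range' (lt_of_le_of_lt p.natDegree_derivative_le (by omega)) a
    rw [hR, Finset.sum_range_succ]
    have hcd0 : p.coeff (d + 1) = 0 :=
      Polynomial.coeff_eq_zero_of_natDegree_lt (by omega)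
    rw [Polynomial.coeff_derivative, hcd0, zero_mul, zero_mul, add_zero]
    refine Finset.sum_congr rfl fun k _ => ?_
    rw [Polynomial.coeff_derivative]
    push_cast
    ring
  -- the extended system
  set ff : Fin n → MvPolynomial (Fin (n + 1) × Fin 4) K :=
    fun i => MvPolynomial.rename (Prod.map Fin.succ id) (f i) with hff
  have hsucc_inj : Function.Injective (Fin.succ : Fin n → Fin (n + 1)) :=
    Fin.succ_injective n
  have h00 : F.jpderivEval 0 f0 z = Polynomial.eval a (Polynomial.derivative p) := by
    rw [JField.jpderivEval, hpd 1 (by decide), hpd 2 (by decide), hpd 3 (by decide)]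
    simp only [map_zero, mul_zero, add_zero]
    exact hpd0
  have hrow : ∀ i : Fin n, F.jpderivEval 0 (ff i) z = 0 := fun i =>
    F.jpderivEval_rename_zero Fin.succ 0
      (by rintro ⟨u, hu⟩; exact Fin.succ_ne_zero u hu) (f i) z
  have hss : ∀ i k : Fin n, F.jpderivEval k.succ (ff i) z = F.jpderivEval k (f i) x :=
    fun i k => by rw [hff, F.jpderivEval_rename hsucc_inj, hzs]
  refine ⟨n, Fin.cons f0 ff, z, hz0, ?_, ?_, ?_⟩
  · -- coefficients
    intro i m
    induction i using Fin.cases with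
    | zero =>
        simp only [Fin.cons_zero]
        have hf0TA : f0 ∈ TA := by
          rw [hf0]
          refine Subring.sum_mem _ fun k _ => Subring.mul_mem _ (hT'TA (hqT k))
            (Subring.pow_mem _ ?_ k)
          intro mm
          rw [hX0, MvPolynomial.coeff_X']
          split_ifs
          exacts [S0.one_mem, S0.zero_mem]
        exact hf0TA m
    | succ i =>
        simp only [Fin.cons_succ, hff]
        exact coeff_rename_mem (hsucc_inj.prodMap Function.injective_id) _ _ (hfc i) m
  · -- vanishing
    intro i
    induction i using Fin.cases with
    | zero =>
        simp only [Fin.cons_zero]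
        exact hEf0.trans h0
    | succ i =>
        simp only [Fin.cons_succ, hff]
        rw [MvPolynomial.eval_rename, F.jVal_comp, hzs]
        exact hfe i
  · -- Jacobian
    rw [Matrix.det_succ_column_zero, Fin.sum_univ_succ]
    have hent0 : ∀ i : Fin n,
        (Matrix.of fun i k => F.jpderivEval k ((Fin.cons f0 ff : Fin (n + 1) → MvPolynomial (Fin (n + 1) × Fin 4) K) i) z) i.succ 0 = 0 := fun i => by
      simp only [Matrix.of_apply, Fin.cons_succ]
      exact hrow i
    have hsubm : (Matrix.of fun i k =>
          F.jpderivEval k ((Fin.cons f0 ff : Fin (n + 1) → MvPolynomial (Fin (n + 1) × Fin 4) K) i) z).submatrix (Fin.succAbove 0) Fin.succ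
        = Matrix.of fun i k => F.jpderivEval k (f i) x := by
      ext i k
      simp only [Matrix.submatrix_apply, Fin.succAbove_zero, Matrix.of_apply, Fin.cons_succ]
      exact hss i k
    rw [Finset.sum_eq_zero fun i _ => by rw [hent0 i, mul_zero, zero_mul]]
    rw [add_zero, hsubm]
    simp only [Matrix.of_apply, Fin.cons_zero]
    rw [h00]
    simp only [Fin.val_zero, pow_zero, one_mul]
    exact mul_ne_zero h1 hfd

end JField

end KclAux

/-- In a `j`-field, if `a` is algebraic over the subring generated
by `A` then `a ∈ kcl(A)`; in particular `kcl(A)` is a relatively algebraically closed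
subfield of `K`. -/
theorem algebraic_mem_kcl {K : Type*} [Field K] [CharZero K] (F : JField K)
    (A : Set K) :
    (∀ a : K, IsAlgebraic ↥(Subring.closure A) a → a ∈ F.kcl A) ∧
    (∃ L : Subfield K, (L : Set K) = F.kcl A ∧ ∀ x : K, IsAlgebraic ↥L x → x ∈ L) := by
  classical
  -- Part 1: elements algebraic over the subring generated by `A` lie in `kcl A`.
  have part1 : ∀ a : K, IsAlgebraic ↥(Subring.closure A) a → a ∈ F.kcl A := by
    intro a halg
    obtain ⟨p₀, hp₀ne, hp₀a⟩ := halg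
    have hinj : Function.Injective (algebraMap ↥(Subring.closure A) K) :=
      Subtype.val_injective
    set S : Set ℕ := {dd | ∃ p : Polynomial ↥(Subring.closure A),
      p ≠ 0 ∧ Polynomial.aeval a p = 0 ∧ p.natDegree = dd} with hSdef
    have hSne : S.Nonempty := ⟨p₀.natDegree, p₀, hp₀ne, hp₀a, rfl⟩
    obtain ⟨p, hpne, hpa, hpd⟩ := Nat.sInf_mem hSne
    set P : Polynomial K := p.map (algebraMap ↥(Subring.closure A) K) with hPdef
    have hP0 : Polynomial.eval a P = 0 := by
      rw [hPdef, Polynomial.eval_map, ← Polynomial.aeval_def]; exact hpa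
    have hdeg1 : p.natDegree ≠ 0 := by
      intro h
      obtain ⟨c, hc⟩ := Polynomial.natDegree_eq_zero.mp h
      rw [← hc, Polynomial.aeval_C] at hpa
      have hc0 : c = 0 := hinj (by rw [map_zero]; exact hpa)
      rw [← hc, hc0, map_zero] at hpne
      exact hpne rfl
    have hPne : P ≠ 0 := fun h =>
      hpne (Polynomial.map_injective _ hinj (by rw [Polynomial.map_zero]; exact h))
    have hPdeg : P.natDegree = p.natDegree :=
      Polynomial.natDegree_map_eq_of_injective hinj p
    have hdP : Polynomial.derivative P ≠ 0 := by
      intro h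
      have hco : (Polynomial.derivative P).coeff (P.natDegree - 1) = 0 := by rw [h]; simp
      rw [Polynomial.coeff_derivative] at hco
      have hsum : P.natDegree - 1 + 1 = P.natDegree := by omega
      rw [hsum] at hco
      have hlc : P.coeff P.natDegree ≠ 0 := by
        rw [Polynomial.coeff_natDegree]
        exact Polynomial.leadingCoeff_ne_zero.mpr hPne
      have hcast : ((P.natDegree - 1 : ℕ) : K) + 1 ≠ 0 := by
        have h' : ((P.natDegree - 1 : ℕ) : K) + 1 = ((P.natDegree : ℕ) : K) := by
          rw [← Nat.cast_add_one]
          exact congrArg _ (by omega)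
        rw [h']
        exact Nat.cast_ne_zero.mpr (by omega)
      exact (mul_ne_zero hlc hcast) hco
    have hdp : Polynomial.derivative p ≠ 0 := by
      intro h
      apply hdP
      rw [hPdef, Polynomial.derivative_map, h, Polynomial.map_zero]
    have h1 : Polynomial.eval a (Polynomial.derivative P) ≠ 0 := by
      intro heval
      have hda : Polynomial.aeval a (Polynomial.derivative p) = 0 := by
        rw [Polynomial.aeval_def, ← Polynomial.eval_map, ← Polynomial.derivative_map]
        exact heval
      have hmem : (Polynomial.derivative p).natDegree ∈ S := ⟨_, hdp, hda, rfl⟩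
      have hle := Nat.sInf_le hmem
      have hlt := Polynomial.natDegree_derivative_lt hdeg1
      omega
    refine F.master A ∅ (by simp) a P ?_ hP0 h1
    intro m
    rw [Finset.coe_empty, Set.union_empty, hPdef, Polynomial.coeff_map]
    exact (p.coeff m).2
  -- A convenient closure principle.
  have hXlem : ∀ (s : Finset K), ↑s ⊆ F.kcl A → ∀ c : K,
      c ∈ Subring.closure (A ∪ ↑s) → c ∈ F.kcl A := by
    intro s hsub c hcmem
    refine F.master A s hsub c (Polynomial.X - Polynomial.C c) ?_ (by simp) (by simp)
    intro m
    match m with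
    | 0 =>
        have h' : (Polynomial.X - Polynomial.C c).coeff 0 = -c := by simp
        rw [h']; exact Subring.neg_mem _ hcmem
    | 1 =>
        have h' : (Polynomial.X - Polynomial.C c).coeff 1 = 1 := by simp
        rw [h']; exact Subring.one_mem _
    | (m + 2) =>
        have h' : (Polynomial.X - Polynomial.C c).coeff (m + 2) = 0 := by
          simp [Polynomial.coeff_X, Polynomial.coeff_C]
        rw [h']; exact Subring.zero_mem _
  have h01 : ∀ c : K, c ∈ Subring.closure A → c ∈ F.kcl A := fun c hc =>
    hXlem ∅ (by simp) c (by simpa using hc)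
  have hpair : ∀ u v : K, u ∈ F.kcl A → v ∈ F.kcl A → ∀ c : K,
      c ∈ Subring.closure (A ∪ {u, v}) → c ∈ F.kcl A := by
    intro u v hu hv c hcmem
    refine hXlem {u, v} ?_ c (by simpa using hcmem)
    intro w hw
    simp only [Finset.coe_insert, Finset.coe_singleton, Set.mem_insert_iff,
      Set.mem_singleton_iff] at hw
    rcases hw with rfl | rfl
    exacts [hu, hv]
  set L : Subfield K :=
    { carrier := F.kcl A
      zero_mem' := h01 0 (Subring.zero_mem _)
      one_mem' := h01 1 (Subring.one_mem _)
      add_mem' := fun {u v} hu hv => hpair u v hu hv (u + v)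
        (Subring.add_mem _ (Subring.subset_closure (Or.inr (by simp)))
          (Subring.subset_closure (Or.inr (by simp))))
      mul_mem' := fun {u v} hu hv => hpair u v hu hv (u * v)
        (Subring.mul_mem _ (Subring.subset_closure (Or.inr (by simp)))
          (Subring.subset_closure (Or.inr (by simp))))
      neg_mem' := fun {u} hu => hpair u u hu hu (-u)
        (Subring.neg_mem _ (Subring.subset_closure (Or.inr (by simp))))
      inv_mem' := fun u hu => by
        rcases eq_or_ne u 0 with rfl | hne
        · simpa using h01 0 (Subring.zero_mem _)
        · refine F.master A {u} ?_ u⁻¹ (Polynomial.C u * Polynomial.X - 1) ?_ ?_ ?_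
          · intro w hw
            simp only [Finset.coe_singleton, Set.mem_singleton_iff] at hw
            rw [hw]; exact hu
          · intro m
            match m with
            | 0 =>
                have h' : (Polynomial.C u * Polynomial.X - 1).coeff 0 = -1 := by simp
                rw [h']; exact Subring.neg_mem _ (Subring.one_mem _)
            | 1 =>
                have h' : (Polynomial.C u * Polynomial.X - 1).coeff 1 = u := by
                  simp [Polynomial.coeff_one]
                rw [h']
                exact Subring.subset_closure (Or.inr (by simp))
            | (m + 2) =>
                have h' : (Polynomial.C u * Polynomial.X - 1).coeff (m + 2) = 0 := by
                  simp [Polynomial.coeff_X, Polynomial.coeff_one]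
                rw [h']; exact Subring.zero_mem _
          · simp [mul_inv_cancel₀ hne]
          · simp [hne] } with hLdef
  refine ⟨part1, L, rfl, ?_⟩
  intro xx hxx
  have hint : IsIntegral ↥L xx := hxx.isIntegral
  have hirr := minpoly.irreducible hint
  have hsep : (minpoly ↥L xx).Separable := hirr.separable
  set P : Polynomial K := (minpoly ↥L xx).map (algebraMap ↥L K) with hPdef
  have hP0 : Polynomial.eval xx P = 0 := by
    rw [hPdef, Polynomial.eval_map, ← Polynomial.aeval_def]
    exact minpoly.aeval ↥L xx
  have hPsep : P.Separable := hsep.map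
  obtain ⟨u, v, huv⟩ := hPsep
  have h1 : Polynomial.eval xx (Polynomial.derivative P) ≠ 0 := by
    intro hzero
    have hh := congrArg (Polynomial.eval xx) huv
    rw [Polynomial.eval_add, Polynomial.eval_mul, Polynomial.eval_mul, hP0, hzero] at hh
    simp at hh
  set sfin : Finset K := (Finset.range (P.natDegree + 1)).image (fun k => P.coeff k)
    with hsfin
  have hsub : ↑sfin ⊆ F.kcl A := by
    intro c hcm
    obtain ⟨k, -, hk⟩ := Finset.mem_image.mp (by exact_mod_cast hcm)
    rw [← hk, hPdef, Polynomial.coeff_map]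
    exact ((minpoly ↥L xx).coeff k).2
  have hcoeffs : ∀ m, P.coeff m ∈ Subring.closure (A ∪ ↑sfin) := by
    intro m
    by_cases hm : m < P.natDegree + 1
    · exact Subring.subset_closure (Or.inr (Finset.mem_coe.mpr
        (Finset.mem_image.mpr ⟨m, Finset.mem_range.mpr hm, rfl⟩)))
    · rw [Polynomial.coeff_eq_zero_of_natDegree_lt (by omega)]
      exact Subring.zero_mem _
  exact F.master A sfin hsub xx P hcoeffs hP0 h1
end

section
/- Suppose t₁,…,t_m ∈ ℍ \ D_C satisfy tr.deg._C C(t, J(t)) = 3·dim_G(t|C) + dim^j(t|C), where C = jcl(∅) ⊆ ℂ and D_C = ℍ ∩ C. Then for any z₁,…,z_n ∈ ℍ: tr.deg._{C(t,J(t))} C(z, t, J(z), J(t)) ≥ 3·dim_G(z | C ∪ t) + dim^j(z | C ∪ t). -/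
/-!
Apply the Ax–Schanuel inequality over the `jcl`-closed field `C = jcl(∅)` to the joint tuple
`(t, z)`. Transcendence degree is subadditive in the tower `C ⊆ C(t, J(t)) ⊆ C(t, z, J(t), J(z))`,
while `dim_G` and `dim^j`, as dimensions of pregeometries, are superadditive:
`dim(t, z | C) ≥ dim(t | C) + dim(z | C ∪ t)`. For `t` the inequality is an equality between
finite quantities, so cancelling it leaves the inequality for `z` over `C(t, J(t))`.
-/

section Pregeometry

variable {α : Type*}

/-- Monotonicity is not an axiom: it follows from the first two (`IsPregeometry.cl_mono`). -/
structure IsPregeometry (cl : Set α → Set α) : Prop where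
  subset_cl : ∀ X, X ⊆ cl X
  cl_subset_of_subset : ∀ {X Y}, X ⊆ cl Y → cl X ⊆ cl Y
  exchange : ∀ {X a b}, a ∈ cl (insert b X) → a ∉ cl X → b ∈ cl (insert a X)

def IndepOver [DecidableEq α] (cl : Set α → Set α) (I : Finset α) (B : Set α) : Prop :=
  ∀ x ∈ I, x ∉ cl (↑(I.erase x) ∪ B)

/-- `Gdim` and `JField.jdim` are `pdim Gcl` and `pdim F.jcl` by definition. -/
noncomputable def pdim (cl : Set α → Set α) (A B : Set α) : ℕ∞ :=
  sInf {n : ℕ∞ | ∃ S : Finset α, ↑S ⊆ A ∧ (S.card : ℕ∞) = n ∧ A ⊆ cl (↑S ∪ B)}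

namespace IsPregeometry

variable {cl : Set α → Set α}

theorem cl_mono (h : IsPregeometry cl) {X Y : Set α} (hXY : X ⊆ Y) : cl X ⊆ cl Y :=
  h.cl_subset_of_subset (hXY.trans (h.subset_cl Y))

theorem cl_cl (h : IsPregeometry cl) (X : Set α) : cl (cl X) = cl X :=
  (h.cl_subset_of_subset subset_rfl).antisymm (h.subset_cl _)

section Indep

variable [DecidableEq α]

theorem indepOver_of_subset (h : IsPregeometry cl) {I J : Finset α} {B : Set α}
    (hJ : IndepOver cl J B) (hIJ : I ⊆ J) : IndepOver cl I B := fun x hx hxcl =>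
  hJ x (hIJ hx) (h.cl_mono (Set.union_subset_union_left _
    (Finset.coe_subset.2 (Finset.erase_subset_erase x hIJ))) hxcl)

theorem indepOver_insert (h : IsPregeometry cl) {I : Finset α} {B : Set α} {y : α}
    (hI : IndepOver cl I B) (hy : y ∉ cl (↑I ∪ B)) : IndepOver cl (insert y I) B := by
  have hyI : y ∉ I := fun hyI => hy (h.subset_cl _ (Or.inl hyI))
  intro x hx hxcl
  rcases Finset.mem_insert.1 hx with rfl | hxI
  · rw [Finset.erase_insert hyI] at hxcl
    exact hy hxcl
  · have hxy : y ≠ x := fun hxy => hyI (hxy ▸ hxI)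
    rw [Finset.erase_insert_of_ne hxy, Finset.coe_insert, Set.insert_union] at hxcl
    have hyx := h.exchange hxcl (hI x hxI)
    rw [← Set.insert_union, ← Finset.coe_insert, Finset.insert_erase hxI] at hyx
    exact hy hyx

theorem indepOver_union (h : IsPregeometry cl) {I J : Finset α} {B T : Set α}
    (hI : IndepOver cl I B) (hIT : ↑I ⊆ T) (hJ : IndepOver cl J (B ∪ T)) :
    IndepOver cl (I ∪ J) B := by
  induction J using Finset.induction_on with
  | empty => simpa using hI
  | insert y J hyJ ih =>
    rw [Finset.union_insert]
    refine h.indepOver_insert (ih (h.indepOver_of_subset hJ (Finset.subset_insert _ _))) ?_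
    refine fun hy => hJ y (Finset.mem_insert_self y J) (h.cl_mono ?_ hy)
    rw [Finset.erase_insert hyJ, Finset.coe_union]
    rintro z ((hz | hz) | hz)
    · exact Or.inr (Or.inr (hIT hz))
    · exact Or.inl hz
    · exact Or.inr (Or.inl hz)

/-- The exchange step of the Steinitz argument: if `I` stops being independent once `s` is
added to the base, removing one witness of that restores independence. -/
theorem indepOver_erase_of_mem_cl (h : IsPregeometry cl) {I : Finset α} {B : Set α} {s x : α}
    (hI : IndepOver cl I B) (hxI : x ∈ I) (hx : x ∈ cl (↑(I.erase x) ∪ insert s B)) :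
    IndepOver cl (I.erase x) (insert s B) := by
  intro y hy hycl
  have hyI := Finset.mem_of_mem_erase hy
  set X : Set α := ↑((I.erase x).erase y) ∪ B
  have hsy : s ∈ cl (insert y X) := by
    refine h.exchange (by rwa [Set.union_insert] at hycl) fun hyX => hI y hyI (h.cl_mono ?_ hyX)
    refine Set.union_subset_union_left _ (Finset.coe_subset.2 ?_)
    exact Finset.erase_subset_erase y (Finset.erase_subset x I)
  have hxy : x ∈ cl (insert y X) := by
    refine h.cl_subset_of_subset ?_ hx
    rintro z (hz | hz | hz)
    · by_cases hzy : z = y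
      · exact h.subset_cl _ (Or.inl hzy)
      · exact h.subset_cl _ (Or.inr (Or.inl (Finset.mem_erase.2 ⟨hzy, hz⟩)))
    · exact hz ▸ hsy
    · exact h.subset_cl _ (Or.inr (Or.inr hz))
  refine hI x hxI (h.cl_mono ?_ hxy)
  rintro z (rfl | hz | hz)
  · exact Or.inl hy
  · exact Or.inl (Finset.mem_of_mem_erase hz)
  · exact Or.inr hz

theorem card_le_of_indepOver (h : IsPregeometry cl) {S : Finset α} :
    ∀ {I : Finset α} {B : Set α}, IndepOver cl I B → ↑I ⊆ cl (↑S ∪ B) → I.card ≤ S.card := by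
  induction S using Finset.induction_on with
  | empty =>
    intro I B hI hIS
    refine (Finset.card_eq_zero.2 (Finset.eq_empty_of_forall_notMem fun x hx => ?_)).le
    exact hI x hx (h.cl_mono Set.subset_union_right (by simpa using hIS hx))
  | insert s S hsS ih =>
    intro I B hI hIS
    rw [Finset.coe_insert, Set.insert_union, ← Set.union_insert] at hIS
    rw [Finset.card_insert_of_notMem hsS]
    by_cases hIs : IndepOver cl I (insert s B)
    · exact (ih hIs hIS).trans (Nat.le_succ _)
    · obtain ⟨x, hxI, hx⟩ : ∃ x ∈ I, x ∈ cl (↑(I.erase x) ∪ insert s B) := by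
        simpa [IndepOver] using hIs
      have := ih (h.indepOver_erase_of_mem_cl hI hxI hx)
        ((Finset.coe_subset.2 (Finset.erase_subset x I)).trans hIS)
      have := Finset.card_erase_add_one hxI
      omega

theorem card_le_pdim (h : IsPregeometry cl) {I : Finset α} {A B : Set α}
    (hI : IndepOver cl I B) (hIA : ↑I ⊆ A) : (I.card : ℕ∞) ≤ pdim cl A B :=
  le_sInf fun _ ⟨_, _, hS, hAS⟩ => hS ▸ by exact_mod_cast h.card_le_of_indepOver hI (hIA.trans hAS)

theorem exists_indepOver_card_eq_pdim (h : IsPregeometry cl) {A : Set α} (hA : A.Finite)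
    (B : Set α) : ∃ S : Finset α, ↑S ⊆ A ∧ (S.card : ℕ∞) = pdim cl A B ∧ IndepOver cl S B := by
  obtain ⟨S, hSA, hS, hAS⟩ := csInf_mem (s := {n : ℕ∞ | ∃ S : Finset α, ↑S ⊆ A ∧
      (S.card : ℕ∞) = n ∧ A ⊆ cl (↑S ∪ B)})
    ⟨_, hA.toFinset, by simp, rfl, fun x hx => h.subset_cl _ (Or.inl (by simpa using hx))⟩
  refine ⟨S, hSA, hS, fun x hx hxcl => ?_⟩
  -- a spanning set of minimal size is independent, since otherwise `S.erase x` would span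
  have hAS' : A ⊆ cl (↑(S.erase x) ∪ B) := by
    refine hAS.trans (h.cl_subset_of_subset ?_)
    rintro z (hz | hz)
    · by_cases hzx : z = x
      · exact hzx ▸ hxcl
      · exact h.subset_cl _ (Or.inl (Finset.mem_erase.2 ⟨hzx, hz⟩))
    · exact h.subset_cl _ (Or.inr hz)
  have hle : pdim cl A B ≤ (S.erase x).card :=
    sInf_le ⟨S.erase x, (Finset.coe_subset.2 (Finset.erase_subset x S)).trans hSA, rfl, hAS'⟩
  rw [pdim, ← hS, Nat.cast_le] at hle
  exact (Finset.card_erase_lt_of_mem hx).not_ge hle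

end Indep

theorem pdim_add_pdim_le (h : IsPregeometry cl) {T Z : Set α} (hT : T.Finite) (hZ : Z.Finite)
    (B : Set α) : pdim cl T B + pdim cl Z (B ∪ T) ≤ pdim cl (T ∪ Z) B := by
  classical
  obtain ⟨S₁, hS₁T, hc₁, hI₁⟩ := h.exists_indepOver_card_eq_pdim hT B
  obtain ⟨S₂, hS₂Z, hc₂, hI₂⟩ := h.exists_indepOver_card_eq_pdim hZ (B ∪ T)
  have hdisj : Disjoint S₁ S₂ := Finset.disjoint_left.2 fun x hx₁ hx₂ =>
    hI₂ x hx₂ (h.subset_cl _ (Or.inr (Or.inr (hS₁T hx₁))))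
  rw [← hc₁, ← hc₂, ← Nat.cast_add, ← Finset.card_union_of_disjoint hdisj]
  exact h.card_le_pdim (h.indepOver_union hI₁ hS₁T hI₂)
    (Finset.coe_union S₁ S₂ ▸ Set.union_subset_union hS₁T hS₂Z)

end IsPregeometry

end Pregeometry

section Moebius

variable {K : Type*} [Field K]

theorem mEntry_mul (g h : GL2Q) (i k : Fin 2) :
    mEntry (g * h) i k = mEntry g i 0 * mEntry h 0 k + mEntry g i 1 * mEntry h 1 k := by
  simp [mEntry, Matrix.mul_apply, Fin.sum_univ_two]

theorem moebDen_one (x : K) : moebDen 1 x = 1 := by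
  simp [moebDen, mEntry]

theorem moeb_one (x : K) : moeb 1 x = x := by
  simp [moeb, moebNum, moebDen_one, mEntry]

theorem MoebRel.one (x : K) : MoebRel 1 x x :=
  ⟨moebDen_one x ▸ one_ne_zero, moeb_one x⟩

theorem moebNum_mul [CharZero K] (g h : GL2Q) {x : K} (hx : moebDen h x ≠ 0) :
    moebNum (g * h) x = moebNum g (moeb h x) * moebDen h x := by
  have hx' : moeb h x * moebDen h x = moebNum h x := div_mul_cancel₀ _ hx
  simp only [moebNum, moebDen, mEntry_mul] at hx' ⊢
  push_cast
  linear_combination -(mEntry g 0 0 : K) * hx'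

theorem moebDen_mul [CharZero K] (g h : GL2Q) {x : K} (hx : moebDen h x ≠ 0) :
    moebDen (g * h) x = moebDen g (moeb h x) * moebDen h x := by
  have hx' : moeb h x * moebDen h x = moebNum h x := div_mul_cancel₀ _ hx
  simp only [moebNum, moebDen, mEntry_mul] at hx' ⊢
  push_cast
  linear_combination -(mEntry g 1 0 : K) * hx'

theorem MoebRel.mul [CharZero K] {g h : GL2Q} {x y z : K} (hh : MoebRel h x y)
    (hg : MoebRel g y z) : MoebRel (g * h) x z := by
  obtain ⟨hx, rfl⟩ := hh
  obtain ⟨hy, rfl⟩ := hg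
  refine ⟨moebDen_mul g h hx ▸ mul_ne_zero hy hx, ?_⟩
  rw [moeb, moebNum_mul g h hx, moebDen_mul g h hx, mul_div_mul_right _ _ hx]
  rfl

theorem MoebRel.inv [CharZero K] {g : GL2Q} {x y : K} (hg : MoebRel g x y) : MoebRel g⁻¹ y x := by
  obtain ⟨hx, rfl⟩ := hg
  have hden := moebDen_mul g⁻¹ g hx
  rw [inv_mul_cancel, moebDen_one] at hden
  have hy : moebDen g⁻¹ (moeb g x) ≠ 0 := left_ne_zero_of_mul (hden ▸ one_ne_zero)
  have hcomp := (MoebRel.mul ⟨hx, rfl⟩ ⟨hy, rfl⟩).2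
  rw [inv_mul_cancel, moeb_one] at hcomp
  exact ⟨hy, hcomp.symm⟩

theorem isPregeometry_Gcl [CharZero K] : IsPregeometry (Gcl (K := K)) where
  subset_cl _ x hx := ⟨x, hx, 1, MoebRel.one x⟩
  cl_subset_of_subset hXY := by
    rintro z ⟨x, hx, g, hg⟩
    obtain ⟨y, hy, h, hh⟩ := hXY hx
    exact ⟨y, hy, g * h, hh.mul hg⟩
  exchange := by
    rintro X a b ⟨c, rfl | hc, g, hg⟩ ha
    · exact ⟨a, Set.mem_insert a X, g⁻¹, hg.inv⟩
    · exact absurd ⟨c, hc, g, hg⟩ ha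

end Moebius

namespace JField

variable {K : Type*} [Field K] [CharZero K] {F : JField K}

theorem JImage_union (F : JField K) (A B : Set K) :
    F.JImage (A ∪ B) = F.JImage A ∪ F.JImage B := by
  simp only [JImage, Set.image_union]
  ac_rfl

theorem JImage_finite (F : JField K) {A : Set K} (hA : A.Finite) : (F.JImage A).Finite :=
  ((hA.image F.j).union (hA.image F.j')).union (hA.image F.j'')

theorem IsJDer.smul {d : Derivation ℚ K K} (hd : F.IsJDer d) (c : K) :
    F.IsJDer (c • d) := fun z hz => by
  obtain ⟨h₁, h₂, h₃⟩ := hd z hz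
  simp only [Derivation.smul_apply, smul_eq_mul, h₁, h₂, h₃]
  exact ⟨by ring, by ring, by ring⟩

theorem IsJDer.sub {d₁ d₂ : Derivation ℚ K K} (hd₁ : F.IsJDer d₁) (hd₂ : F.IsJDer d₂) :
    F.IsJDer (d₁ - d₂) := fun z hz => by
  obtain ⟨h₁, h₂, h₃⟩ := hd₁ z hz
  obtain ⟨h₁', h₂', h₃'⟩ := hd₂ z hz
  simp only [Derivation.sub_apply, h₁, h₂, h₃, h₁', h₂', h₃']
  exact ⟨by ring, by ring, by ring⟩

theorem isPregeometry_jcl (F : JField K) : IsPregeometry F.jcl where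
  subset_cl _ x hx _ _ hX := hX x hx
  cl_subset_of_subset hXY _ ha d hd hY := ha d hd fun x hx => hXY hx d hd hY
  exchange := by
    intro X a b hab ha d hd hdX
    by_contra hdb
    obtain ⟨d₀, hd₀, hd₀X, hd₀a⟩ : ∃ d₀ : Derivation ℚ K K, F.IsJDer d₀ ∧
        (∀ x ∈ X, d₀ x = 0) ∧ d₀ a ≠ 0 := by
      simpa [jcl] using ha
    -- this combination of `d` and `d₀` kills `X ∪ {b}`, hence `a`
    have hDa := hab (d b • d₀ - d₀ b • d) ((hd₀.smul _).sub (hd.smul _)) <| by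
      rintro x (rfl | hx)
      · simp [mul_comm]
      · simp [hd₀X x hx, hdX x (Or.inr hx)]
    simp [hdX a (Set.mem_insert a X), hdb, hd₀a] at hDa

end JField

section TranscendenceDegree

variable {K : Type*} [Field K]

theorem IsAlgebraic.tower_top_of_subfield_le {L M : Subfield K} (hLM : L ≤ M) {a : K}
    (ha : IsAlgebraic L a) : IsAlgebraic M a := by
  let : Algebra L M := (Subfield.inclusion hLM).toAlgebra
  have : IsScalarTower L M K := .of_algebraMap_eq fun _ => rfl
  exact ha.extendScalars (Subfield.inclusion hLM).injective

theorem isAlgebraic_of_mem_subfield {L : Subfield K} {a : K} (ha : a ∈ L) : IsAlgebraic L a :=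
  isAlgebraic_algebraMap (⟨a, ha⟩ : L)

theorem IsAlgebraic.of_subfield_closure_union {L : Subfield K} {X : Set K}
    (hX : ∀ x ∈ X, IsAlgebraic L x) {a : K} (ha : IsAlgebraic (Subfield.closure (↑L ∪ X)) a) :
    IsAlgebraic L a := by
  have hle : Subfield.closure (↑L ∪ X) ≤ (algebraicClosure L K).toSubfield :=
    Subfield.closure_le.2 <| Set.union_subset
      (fun y hy => mem_algebraicClosure_iff.2 (isAlgebraic_of_mem_subfield hy))
      (fun y hy => mem_algebraicClosure_iff.2 (hX y hy))
  have : IsAlgebraic (algebraicClosure L K) a := ha.tower_top_of_subfield_le hle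
  exact this.restrictScalars L

theorem trdegNat_ne_top (Fb : Subfield K) {A : Set K} (hA : A.Finite) : trdegNat Fb A ≠ ⊤ :=
  ne_top_of_le_ne_top (ENat.natCast_ne_top hA.toFinset.card) <| sInf_le
    ⟨hA.toFinset, by simp, rfl, fun a ha =>
      isAlgebraic_of_mem_subfield (Subfield.subset_closure (Or.inr (by simpa using ha)))⟩

theorem exists_finset_card_eq_trdegNat {Fb : Subfield K} {A : Set K} (h : trdegNat Fb A ≠ ⊤) :
    ∃ S : Finset K, ↑S ⊆ A ∧ (S.card : ℕ∞) = trdegNat Fb A ∧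
      ∀ a ∈ A, IsAlgebraic (Subfield.closure ((Fb : Set K) ∪ ↑S)) a := by
  obtain ⟨n, hn, -⟩ := not_forall₂.1 (mt sInf_eq_top.2 h)
  exact csInf_mem ⟨n, hn⟩

theorem trdegNat_union_le (Fb : Subfield K) (A B : Set K) :
    trdegNat Fb (A ∪ B) ≤
      trdegNat Fb A + trdegNat (Subfield.closure ((Fb : Set K) ∪ A)) B := by
  classical
  rcases eq_or_ne (trdegNat Fb A) ⊤ with hA | hA
  · simp [hA]
  rcases eq_or_ne (trdegNat (Subfield.closure ((Fb : Set K) ∪ A)) B) ⊤ with hB | hB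
  · simp [hB]
  obtain ⟨SA, hSA, hcA, halgA⟩ := exists_finset_card_eq_trdegNat hA
  obtain ⟨SB, hSB, hcB, halgB⟩ := exists_finset_card_eq_trdegNat hB
  set L := Subfield.closure ((Fb : Set K) ∪ ↑(SA ∪ SB))
  have hA_L : ∀ a ∈ A, IsAlgebraic L a := fun a ha =>
    (halgA a ha).tower_top_of_subfield_le <| Subfield.closure_mono <|
      Set.union_subset_union_right _ (Finset.coe_subset.2 Finset.subset_union_left)
  have hbase : Subfield.closure (↑(Subfield.closure ((Fb : Set K) ∪ A)) ∪ ↑SB) ≤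
      Subfield.closure (↑L ∪ A) := by
    refine Subfield.closure_le.2 (Set.union_subset (Subfield.closure_le.2 ?_) fun x hx => ?_)
    · exact (Set.union_subset_union_left A fun x hx => Subfield.subset_closure (Or.inl hx)).trans
        Subfield.subset_closure
    · exact Subfield.subset_closure
        (Or.inl (Subfield.subset_closure (Or.inr (Finset.mem_union_right _ hx))))
  -- `B` is algebraic over `L(A)`, which is algebraic over `L`
  have hB_L : ∀ b ∈ B, IsAlgebraic L b := fun b hb =>
    IsAlgebraic.of_subfield_closure_union hA_L ((halgB b hb).tower_top_of_subfield_le hbase)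
  calc trdegNat Fb (A ∪ B) ≤ ((SA ∪ SB).card : ℕ∞) :=
        sInf_le ⟨SA ∪ SB, Finset.coe_union SA SB ▸ Set.union_subset_union hSA hSB, rfl,
          fun x hx => hx.elim (hA_L x) (hB_L x)⟩
    _ ≤ SA.card + SB.card := mod_cast Finset.card_union_le SA SB
    _ = _ := by rw [hcA, hcB]

end TranscendenceDegree

theorem Fin.range_append {α : Type*} {m n : ℕ} (t : Fin m → α) (z : Fin n → α) :
    Set.range (Fin.append t z) = Set.range t ∪ Set.range z := by
  refine (Set.range_subset_iff.2 (Fin.addCases (by simp) (by simp))).antisymm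
    (Set.union_subset ?_ ?_) <;> refine Set.range_subset_iff.2 fun i => ?_
  exacts [⟨Fin.castAdd n i, Fin.append_left t z i⟩, ⟨Fin.natAdd m i, Fin.append_right t z i⟩]

theorem AS_over_convenient_generators_general (JF : JField ℂ)
    (hAS : ∀ L : Subfield ℂ, (L : Set ℂ) = JF.jcl ↑L →
      ∀ (n : ℕ) (z : Fin n → ℂ), (∀ i, z i ∈ JF.D) →
        3 * Gdim (Set.range z) (L : Set ℂ) + JF.jdim (Set.range z) ↑L ≤
          trdegNat L (Set.range z ∪ JF.JImage (Set.range z)))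
    {m : ℕ} (t : Fin m → ℂ) (ht : ∀ i, t i ∈ JF.D ∧ t i ∉ JF.jcl ∅)
    (hA2 : trdegNat (JF.jclSubfield ∅) (Set.range t ∪ JF.JImage (Set.range t))
      = 3 * Gdim (Set.range t) (JF.jcl ∅) + JF.jdim (Set.range t) (JF.jcl ∅)) :
    ∀ (n : ℕ) (z : Fin n → ℂ), (∀ i, z i ∈ JF.D) →
      3 * Gdim (Set.range z) (JF.jcl ∅ ∪ Set.range t)
        + JF.jdim (Set.range z) (JF.jcl ∅ ∪ Set.range t) ≤
      trdegNat (Subfield.closure (JF.jcl ∅ ∪ Set.range t ∪ JF.JImage (Set.range t)))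
        (Set.range z ∪ JF.JImage (Set.range z)) := by
  intro n z hz
  set C := JF.jclSubfield ∅
  set T := Set.range t
  set Z := Set.range z
  have hT : T.Finite := Set.finite_range t
  have hZ : Z.Finite := Set.finite_range z
  have hTZ := hAS C (JF.isPregeometry_jcl.cl_cl ∅).symm (m + n) (Fin.append t z)
    (Fin.addCases (by simpa using fun i => (ht i).1) (by simpa using hz))
  rw [Fin.range_append, JF.JImage_union, Set.union_union_union_comm] at hTZ
  have hG := isPregeometry_Gcl.pdim_add_pdim_le hT hZ (JF.jcl ∅)
  have hj := JF.isPregeometry_jcl.pdim_add_pdim_le hT hZ (JF.jcl ∅)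
  have htr := trdegNat_union_le C (T ∪ JF.JImage T) (Z ∪ JF.JImage Z)
  have hfin : trdegNat C (T ∪ JF.JImage T) ≠ ⊤ := trdegNat_ne_top C (hT.union (JF.JImage_finite hT))
  rw [Set.union_assoc]
  refine (ENat.add_le_add_iff_left hfin).1 ?_
  calc trdegNat C (T ∪ JF.JImage T) + (3 * Gdim Z (JF.jcl ∅ ∪ T) + JF.jdim Z (JF.jcl ∅ ∪ T))
      = 3 * (Gdim T (JF.jcl ∅) + Gdim Z (JF.jcl ∅ ∪ T))
          + (JF.jdim T (JF.jcl ∅) + JF.jdim Z (JF.jcl ∅ ∪ T)) := by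
        rw [hA2]; ring
    _ ≤ 3 * Gdim (T ∪ Z) (JF.jcl ∅) + JF.jdim (T ∪ Z) (JF.jcl ∅) :=
        add_le_add (mul_le_mul_right hG 3) hj
    _ ≤ _ := hTZ.trans htr

/-- (For the complex `j`-field, assuming the Ax–Schanuel-derived
inequality over `jcl`-closed subfields.) If `t₁, …, t_m ∈ ℍ \ D_C` satisfy
`tr.deg._C C(t, J(t)) = 3·dim_G(t|C) + dim^j(t|C)` where `C = jcl(∅)`, then for all
`z₁, …, z_n ∈ ℍ`:
`tr.deg._{C(t,J(t))} C(z, t, J(z), J(t)) ≥ 3·dim_G(z|C ∪ t) + dim^j(z|C ∪ t)`. -/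
theorem AS_over_convenient_generators (JF : JField ℂ)
    (hD : JF.D = {w : ℂ | w.im ≠ 0})
    (hAS : ∀ L : Subfield ℂ, (L : Set ℂ) = JF.jcl ↑L →
      ∀ (n : ℕ) (z : Fin n → ℂ), (∀ i, z i ∈ JF.D) →
        3 * Gdim (Set.range z) (L : Set ℂ) + JF.jdim (Set.range z) ↑L ≤
          trdegNat L (Set.range z ∪ JF.JImage (Set.range z)))
    {m : ℕ} (t : Fin m → ℂ) (ht : ∀ i, t i ∈ JF.D ∧ t i ∉ JF.jcl ∅)
    (hA2 : trdegNat (JF.jclSubfield ∅) (Set.range t ∪ JF.JImage (Set.range t))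
      = 3 * Gdim (Set.range t) (JF.jcl ∅) + JF.jdim (Set.range t) (JF.jcl ∅)) :
    ∀ (n : ℕ) (z : Fin n → ℂ), (∀ i, z i ∈ JF.D) →
      3 * Gdim (Set.range z) (JF.jcl ∅ ∪ Set.range t)
        + JF.jdim (Set.range z) (JF.jcl ∅ ∪ Set.range t) ≤
      trdegNat (Subfield.closure (JF.jcl ∅ ∪ Set.range t ∪ JF.JImage (Set.range t)))
        (Set.range z ∪ JF.JImage (Set.range z)) :=
  AS_over_convenient_generators_general JF hAS t ht hA2
end

section
/- Let F ⊆ ℂ be a subfield and p(X, Y) ∈ F[X, Y] irreducible in ℂ[X, Y]. Suppose z ∈ ℍ satisfies p(z, j(z)) = 0 and tr.deg._F F(z, j(z)) = 1. Then z and j(z) both lie in jcl(F). (Proof: p forces tr.deg._F F(z, j(z), j'(z), j''(z)) ≤ 3, while by Ax–Schanuel over the jcl-closed field jcl(F) this transcendence degree is 0 or 4, hence 0.) -/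
/-! Since `p ≠ 0` has coefficients in `jcl(F)` and vanishes at `(z, j z)`, one of `z`, `j z` is
algebraic over `jcl(F)` adjoined the other, so `z, j z, j' z, j'' z` have transcendence degree at
most `3` over `jcl(F)`, and the Ax–Schanuel dichotomy makes it `0`. An element algebraic over
`jcl(F)` lies in `jcl(F)`: a derivation killing a field of characteristic zero kills every
element algebraic over it, as one sees by differentiating its separable minimal polynomial. -/

section

variable {K : Type*} [Field K]

theorem IsAlgebraic.of_range_algebraMap_subset {R : Type*} [CommRing R] [Algebra R K]
    {N : Subfield K} (hinj : Function.Injective (algebraMap R K))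
    (hR : Set.range (algebraMap R K) ⊆ N) {a : K} (ha : IsAlgebraic R a) :
    IsAlgebraic N a :=
  ha.ringHom_of_comp_eq ((algebraMap R K).codRestrict N fun r => hR ⟨r, rfl⟩) (RingHom.id K)
    (fun _ _ h => hinj (congrArg Subtype.val h)) rfl

theorem IsAlgebraic.of_subfield_le {M N : Subfield K} (hMN : M ≤ N) {a : K}
    (ha : IsAlgebraic M a) : IsAlgebraic N a :=
  ha.of_range_algebraMap_subset Subtype.val_injective (by rintro _ ⟨c, rfl⟩; exact hMN c.2)

theorem isAlgebraic_or_isAlgebraic_closure_insert_of_eval_eq_zero {M : Subfield K}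
    {p : MvPolynomial (Fin 2) K} (hp : p ≠ 0) (hcoeff : ∀ m, p.coeff m ∈ M) {x y : K}
    (h : MvPolynomial.eval ![x, y] p = 0) :
    IsAlgebraic M y ∨ IsAlgebraic (Subfield.closure (insert y (M : Set K))) x := by
  obtain ⟨q, rfl⟩ : p ∈ Set.range (MvPolynomial.map M.subtype) :=
    MvPolynomial.mem_range_map_iff_coeffs_subset.mpr fun c hc => by
      obtain ⟨m, -, rfl⟩ := MvPolynomial.mem_coeffs_iff.mp hc
      exact ⟨⟨_, hcoeff m⟩, rfl⟩
  have hdep : ¬ AlgebraicIndependent M ![x, y] := fun hind =>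
    hp (by rw [algebraicIndependent_iff.mp hind q (by rwa [MvPolynomial.eval_map] at h), map_zero])
  rw [← algebraicIndependent_equiv' (finSuccEquiv 1).symm
      (g := fun o : Option (Fin 1) ↦ o.elim x ![y]) (by ext i; fin_cases i <;> rfl),
    AlgebraicIndependent.option_iff, algebraicIndependent_iff_transcendental,
    Matrix.range_cons, Matrix.range_empty, Set.union_empty] at hdep
  have hadjoin : Set.range (algebraMap (Algebra.adjoin M {y}) K) ⊆
      Subfield.closure (insert y (M : Set K)) := by
    rintro _ ⟨⟨c, hc⟩, rfl⟩
    refine Subring.closure_le.mpr ?_ (Algebra.mem_adjoin_iff.mp hc)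
    rintro _ (⟨m, rfl⟩ | rfl)
    · exact Subfield.subset_closure (Set.mem_insert_of_mem _ m.2)
    · exact Subfield.subset_closure (Set.mem_insert _ _)
  simp only [Transcendental, not_and, not_not] at hdep
  exact (em (IsAlgebraic M y)).imp_right
    fun hy => (hdep hy).of_range_algebraMap_subset Subtype.val_injective hadjoin

end

open Polynomial in
theorem Derivation.eq_zero_of_isAlgebraic {K : Type*} [Field K] [CharZero K]
    (D : Derivation ℚ K K) {M : Subfield K} (hM : ∀ x ∈ M, D x = 0) {a : K}
    (ha : IsAlgebraic M a) : D a = 0 := by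
  have hchain : ∀ r : M[X], D (aeval a r) = aeval a (derivative r) * D a := by
    intro r
    induction r using Polynomial.induction_on' with
    | add f g hf hg => simp [hf, hg, add_mul]
    | monomial n c =>
      have hc : D (algebraMap M K c) = 0 := hM _ c.2
      simp only [aeval_monomial, leibniz, leibniz_pow, hc, derivative_monomial, map_mul,
        _root_.map_natCast, nsmul_eq_mul, smul_eq_mul]
      ring
  have hsep : aeval a (derivative (minpoly M a)) ≠ 0 :=
    (minpoly.irreducible ha.isIntegral).separable.aeval_derivative_ne_zero (minpoly.aeval M a)
  have hzero : aeval a (derivative (minpoly M a)) * D a = 0 := by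
    rw [← hchain, minpoly.aeval, map_zero]
  exact (mul_eq_zero.mp hzero).resolve_left hsep

section

variable {K : Type*} [Field K] {L : Subfield K}

theorem trdegNat_le_card {A : Set K} {S : Finset K} (hSA : ↑S ⊆ A)
    (halg : ∀ a ∈ A, IsAlgebraic (Subfield.closure ((L : Set K) ∪ ↑S)) a) :
    trdegNat L A ≤ S.card :=
  sInf_le ⟨S, hSA, rfl, halg⟩

theorem trdegNat_le_card_of_isAlgebraic {A : Set K} {S : Finset K} {a : K}
    (hSA : ↑S ⊆ A) (hAS : A ⊆ insert a ↑S)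
    (ha : IsAlgebraic (Subfield.closure ((L : Set K) ∪ ↑S)) a) :
    trdegNat L A ≤ S.card :=
  trdegNat_le_card hSA fun _ hb => (hAS hb).elim (· ▸ ha)
    fun hbS => isAlgebraic_algebraMap
      (⟨_, Subfield.subset_closure (Or.inr hbS)⟩ : Subfield.closure ((L : Set K) ∪ ↑S))

theorem trdegNat_le_three_of_eval_eq_zero {p : MvPolynomial (Fin 2) K} (hp : p ≠ 0)
    (hcoeff : ∀ m, p.coeff m ∈ L) {x y : K} (h : MvPolynomial.eval ![x, y] p = 0) (u v : K) :
    trdegNat L {x, y, u, v} ≤ 3 := by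
  classical
  rcases isAlgebraic_or_isAlgebraic_closure_insert_of_eval_eq_zero hp hcoeff h with hy | hx
  · calc trdegNat L {x, y, u, v} ≤ ({x, u, v} : Finset K).card :=
          trdegNat_le_card_of_isAlgebraic (a := y) (by simp [Set.insert_subset_iff])
            (by simp [Set.insert_subset_iff])
            (hy.of_subfield_le fun _ hc => Subfield.subset_closure (Or.inl hc))
      _ ≤ 3 := mod_cast Finset.card_le_three
  · calc trdegNat L {x, y, u, v} ≤ ({y, u, v} : Finset K).card :=
          trdegNat_le_card_of_isAlgebraic (a := x) (by simp) (by simp)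
            (hx.of_subfield_le (Subfield.closure_mono
              (Set.insert_subset (Set.mem_union_right _ (by simp)) Set.subset_union_left)))
      _ ≤ 3 := mod_cast Finset.card_le_three

theorem isAlgebraic_of_trdegNat_eq_zero {A : Set K} (h : trdegNat L A = 0) {a : K}
    (ha : a ∈ A) : IsAlgebraic L a := by
  have hne : {n : ℕ∞ | ∃ S : Finset K, ↑S ⊆ A ∧ (S.card : ℕ∞) = n ∧
      ∀ a ∈ A, IsAlgebraic (Subfield.closure ((L : Set K) ∪ ↑S)) a}.Nonempty :=
    Set.nonempty_iff_ne_empty.mpr fun he => by simp [trdegNat, he] at h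
  have hmem : trdegNat L A ∈ _ := csInf_mem hne
  obtain ⟨S, -, hcard, halg⟩ := h ▸ hmem
  rw [Finset.card_eq_zero.mp (by exact_mod_cast hcard : S.card = 0), Finset.coe_empty,
    Set.union_empty, Subfield.closure_eq] at halg
  exact halg a ha

end

namespace JField

variable {K : Type*} [Field K] [CharZero K] (F : JField K)

theorem subset_jcl (X : Set K) : X ⊆ F.jcl X :=
  fun x hx _ _ hX => hX x hx

theorem mem_jcl_of_isAlgebraic {X : Set K} {a : K} (ha : IsAlgebraic (F.jclSubfield X) a) :
    a ∈ F.jcl X :=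
  fun D hD hX => D.eq_zero_of_isAlgebraic (fun x (hx : x ∈ F.jcl X) => hx D hD hX) ha

end JField

theorem curve_point_mem_jcl_general (JF : JField ℂ)
    (Fs : Subfield ℂ) (p : MvPolynomial (Fin 2) ℂ)
    (hcoeff : ∀ m, p.coeff m ∈ Fs) (hirr : Irreducible p)
    (hAS : ∀ w ∈ JF.D,
      trdegNat (JF.jclSubfield ↑Fs) {w, JF.j w, JF.j' w, JF.j'' w} = 0 ∨
      trdegNat (JF.jclSubfield ↑Fs) {w, JF.j w, JF.j' w, JF.j'' w} = 4)
    (z : ℂ) (hz : z ∈ JF.D)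
    (heval : MvPolynomial.eval ![z, JF.j z] p = 0) :
    z ∈ JF.jcl ↑Fs ∧ JF.j z ∈ JF.jcl ↑Fs := by
  have hle : trdegNat (JF.jclSubfield ↑Fs) {z, JF.j z, JF.j' z, JF.j'' z} ≤ 3 :=
    trdegNat_le_three_of_eval_eq_zero hirr.ne_zero (fun m => JF.subset_jcl _ (hcoeff m)) heval _ _
  have hzero := (hAS z hz).resolve_right fun h4 => by norm_num [h4] at hle
  exact ⟨JF.mem_jcl_of_isAlgebraic (isAlgebraic_of_trdegNat_eq_zero hzero (by simp)),
    JF.mem_jcl_of_isAlgebraic (isAlgebraic_of_trdegNat_eq_zero hzero (by simp))⟩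

/-- (For the complex `j`-field, assuming the Ax–Schanuel input that
`tr.deg._{jcl(F)} jcl(F)(w, j(w), j'(w), j''(w)) ∈ {0, 4}` for `w ∈ ℍ`.) If
`p(X, Y) ∈ F[X, Y]` is irreducible in `ℂ[X, Y]`, `z ∈ ℍ` with `p(z, j(z)) = 0` and
`tr.deg._F F(z, j(z)) = 1`, then `z, j(z) ∈ jcl(F)`. -/
theorem curve_point_mem_jcl (JF : JField ℂ)
    (hD : JF.D = {w : ℂ | w.im ≠ 0})
    (Fs : Subfield ℂ) (p : MvPolynomial (Fin 2) ℂ)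
    (hcoeff : ∀ m, p.coeff m ∈ Fs) (hirr : Irreducible p)
    (hAS : ∀ w ∈ JF.D,
      trdegNat (JF.jclSubfield ↑Fs) {w, JF.j w, JF.j' w, JF.j'' w} = 0 ∨
      trdegNat (JF.jclSubfield ↑Fs) {w, JF.j w, JF.j' w, JF.j'' w} = 4)
    (z : ℂ) (hz : z ∈ JF.D)
    (heval : MvPolynomial.eval ![z, JF.j z] p = 0)
    (htd : trdegNat Fs {z, JF.j z} = 1) :
    z ∈ JF.jcl ↑Fs ∧ JF.j z ∈ JF.jcl ↑Fs :=
  curve_point_mem_jcl_general JF Fs p hcoeff hirr hAS z hz heval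
end
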